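/- arXiv:1706.07282 — 5 statements merged into one kernel-verified Lean document; each statement's English description precedes it below -/
import Mathlib

section
/- Let Ω ⊆ ℝ^N be a bounded measurable set with |Ω| > 0 and let k ≥ 2 be an integer. Then every (k−1)-adjusted Cheeger k-tuple of Ω is in fact a k-adjusted Cheeger k-tuple of Ω. -/
open MeasureTheory Metric Set Filter Topology
open scoped ENNReal symmDiff

noncomputable section

abbrev EucSp (N : ℕ) := EuclideanSpace ℝ (Fin N)

/-- `E` has Lebesgue density `α` at `x`. -/
def HasDensity {N : ℕ} (E : Set (EucSp N)) (x : EucSp N) (α : ℝ) : Prop :=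
  Tendsto (fun r : ℝ => volume (E ∩ ball x r) / volume (ball x r))
    (𝓝[>] (0:ℝ)) (𝓝 (ENNReal.ofReal α))

/-- The essential boundary `∂^e E = ℝ^N \ (E^{(0)} ∪ E^{(1)})`. -/
def essBdry {N : ℕ} (E : Set (EucSp N)) : Set (EucSp N) :=
  {x | ¬ HasDensity E x 0 ∧ ¬ HasDensity E x 1}

/-- Perimeter `P(E) = ℋ^{N-1}(∂^e E)`. -/
def perim {N : ℕ} (E : Set (EucSp N)) : ℝ≥0∞ := μH[(N:ℝ) - 1] (essBdry E)

/-- Relative perimeter `P(E; A) = ℋ^{N-1}(∂^e E ∩ A)`. -/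
def relPerim {N : ℕ} (E A : Set (EucSp N)) : ℝ≥0∞ := μH[(N:ℝ) - 1] (essBdry E ∩ A)

/-- The Cheeger constant `h₁(Ω)`. -/
def cheeger {N : ℕ} (Ω : Set (EucSp N)) : ℝ≥0∞ :=
  ⨅ (E : Set (EucSp N)) (_ : E ⊆ Ω) (_ : MeasurableSet E) (_ : 0 < volume E),
    perim E / volume E

/-- Admissible `k`-tuples: pairwise disjoint measurable subsets of `Ω` of positive measure. -/
def AdmissibleTuple {N : ℕ} (Ω : Set (EucSp N)) {k : ℕ} (E : Fin k → Set (EucSp N)) : Prop :=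
  (∀ i, E i ⊆ Ω) ∧ (∀ i, MeasurableSet (E i)) ∧ (∀ i, 0 < volume (E i)) ∧
    (∀ i j, i ≠ j → Disjoint (E i) (E j))

/-- The `k`-th Cheeger constant `h_k(Ω)`. -/
def cheegerK {N : ℕ} (k : ℕ) (Ω : Set (EucSp N)) : ℝ≥0∞ :=
  ⨅ (E : Fin k → Set (EucSp N)) (_ : AdmissibleTuple Ω E),
    ⨆ i, perim (E i) / volume (E i)

/-- A Cheeger `k`-tuple of `Ω`: an admissible tuple attaining `h_k(Ω)`. -/
def IsCheegerTuple {N : ℕ} (Ω : Set (EucSp N)) {k : ℕ} (E : Fin k → Set (EucSp N)) : Prop :=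
  AdmissibleTuple Ω E ∧ (⨆ i, perim (E i) / volume (E i)) = cheegerK k Ω

/-- `n`-adjusted Cheeger `k`-tuples. -/
def IsAdjusted {N : ℕ} : ℕ → Set (EucSp N) → (k : ℕ) → (Fin k → Set (EucSp N)) → Prop
  | 0, Ω, _, E => IsCheegerTuple Ω E
  | 1, Ω, _, E => IsCheegerTuple Ω E ∧
      ∀ i, cheeger (Ω \ ⋃ j, ⋃ (_ : j ≠ i), E j) = cheeger (E i) ∧
        cheeger (E i) = perim (E i) / volume (E i)
  | (n+2), Ω, k, E => IsAdjusted (n+1) Ω k E ∧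
      ∀ σ : Fin (n+2) ↪ Fin k,
        IsAdjusted (n+1) (Ω \ ⋃ j, ⋃ (_ : j ∉ Set.range σ), E j) (n+2) (E ∘ σ)



lemma iUnion_ne_comp {N k : ℕ} (E : Fin k → Set (EucSp N)) (e : Fin k ≃ Fin k) (i : Fin k) :
    (⋃ j, ⋃ (_ : j ≠ i), (E ∘ e) j) = ⋃ j, ⋃ (_ : j ≠ e i), E j := by
  ext x
  simp only [Set.mem_iUnion, Function.comp_apply]
  constructor
  · rintro ⟨j, hj, hx⟩
    exact ⟨e j, fun hc => hj (e.injective hc), hx⟩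
  · rintro ⟨j, hj, hx⟩
    refine ⟨e.symm j, fun hc => hj ?_, by simpa using hx⟩
    rw [← e.apply_symm_apply j, hc]

lemma iUnion_range_comp {N k n : ℕ} (E : Fin k → Set (EucSp N)) (e : Fin k ≃ Fin k)
    (σ : Fin n ↪ Fin k) :
    (⋃ j, ⋃ (_ : j ∉ Set.range (σ.trans e.toEmbedding)), E j)
      = ⋃ j, ⋃ (_ : j ∉ Set.range σ), (E ∘ e) j := by
  ext x
  simp only [Set.mem_iUnion, Function.comp_apply, Set.mem_range, not_exists,
    Function.Embedding.trans_apply, Equiv.coe_toEmbedding]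
  constructor
  · rintro ⟨j, hj, hx⟩
    refine ⟨e.symm j, fun a hc => hj a ?_, by simpa using hx⟩
    rw [hc]; simp
  · rintro ⟨j, hj, hx⟩
    exact ⟨e j, fun a hc => hj a (e.injective hc), hx⟩

lemma isCheegerTuple_comp {N k : ℕ} {Ω : Set (EucSp N)} (E : Fin k → Set (EucSp N))
    (e : Fin k ≃ Fin k) (h : IsCheegerTuple Ω E) : IsCheegerTuple Ω (E ∘ e) := by
  obtain ⟨⟨h1, h2, h3, h4⟩, h5⟩ := h
  refine ⟨⟨fun i => h1 _, fun i => h2 _, fun i => h3 _,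
    fun i j hij => h4 _ _ (fun hc => hij (e.injective hc))⟩, ?_⟩
  rw [← h5]
  exact Equiv.iSup_comp (g := fun i => perim (E i) / volume (E i)) e

lemma isAdjusted_comp {N : ℕ} : ∀ (n : ℕ) (Ω : Set (EucSp N)) (k : ℕ)
    (E : Fin k → Set (EucSp N)) (e : Fin k ≃ Fin k),
    IsAdjusted n Ω k E → IsAdjusted n Ω k (E ∘ e)
  | 0, Ω, k, E, e, h => isCheegerTuple_comp E e h
  | 1, Ω, k, E, e, h => by
      refine ⟨isCheegerTuple_comp E e h.1, fun i => ?_⟩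
      rw [iUnion_ne_comp E e i]
      exact h.2 (e i)
  | (n+2), Ω, k, E, e, h => by
      refine ⟨isAdjusted_comp (n+1) Ω k E e h.1, fun σ => ?_⟩
      have h2 := h.2 (σ.trans e.toEmbedding)
      rw [iUnion_range_comp E e σ] at h2
      exact h2

/-- Every `(k-1)`-adjusted Cheeger `k`-tuple is in fact `k`-adjusted. -/
theorem adjusted_pred_imp_adjusted {N : ℕ} (Ω : Set (EucSp N))
    (hΩb : Bornology.IsBounded Ω) (hΩm : MeasurableSet Ω) (hΩv : 0 < volume Ω)
    (k : ℕ) (hk : 2 ≤ k) (E : Fin k → Set (EucSp N))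
    (h : IsAdjusted (k - 1) Ω k E) :
    IsAdjusted k Ω k E := by
  obtain ⟨m, rfl⟩ : ∃ m, k = m + 2 := ⟨k - 2, by omega⟩
  have h' : IsAdjusted (m + 1) Ω (m + 2) E := h
  refine ⟨h', fun σ => ?_⟩
  have hsurj : Function.Surjective σ := Finite.injective_iff_surjective.mp σ.injective
  have hrange : Set.range σ = Set.univ := Set.range_eq_univ.mpr hsurj
  have hU : (⋃ j, ⋃ (_ : j ∉ Set.range σ), E j) = ∅ := by simp [hrange]
  rw [hU, Set.diff_empty]
  exact isAdjusted_comp (m + 1) Ω (m + 2) E (Equiv.ofBijective σ ⟨σ.injective, hsurj⟩) h'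


end
end

section
/- Let Ω ⊂ ℝ^N be a bounded open set and let (E_1,…,E_k) be a 1-adjusted Cheeger k-tuple of Ω; for each i set M_i := ⋃_{j≠i} E_j. Then for every i ∈ {1,…,k}, every open ball B_r of radius r ∈ (0, 1/h_k(Ω)) whose closure is contained in Ω, and every set of finite perimeter L ⊆ M_i such that M_i ∖ L is compactly contained in B_r, one has P(M_i; B_r) ≤ P(L; B_r) + h_k(Ω)·|M_i ∖ L|; that is, M_i has distributional mean curvature bounded from above by h_k(Ω) in Ω. -/
open MeasureTheory Metric Set Filter Topology
open scoped ENNReal symmDiff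

noncomputable section

/-- `S` is compactly contained in `U`: up to a Lebesgue-null set, `S` is contained in a
compact subset of `U`. -/
def CompactlyContained {N : ℕ} (S U : Set (EucSp N)) : Prop :=
  ∃ K : Set (EucSp N), IsCompact K ∧ K ⊆ U ∧ volume (S \ K) = 0

namespace CheegerAux

/-- The density ratio. -/
def rat (S : Set (EucSp N)) (x : EucSp N) (s : ℝ) : ℝ≥0∞ :=
  volume (S ∩ ball x s) / volume (ball x s)

lemma hasDensity_zero_iff {S : Set (EucSp N)} {x : EucSp N} :
    HasDensity S x 0 ↔ Tendsto (rat S x) (𝓝[>] (0:ℝ)) (𝓝 0) := by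
  simp only [HasDensity, ENNReal.ofReal_zero]; rfl

lemma hasDensity_one_iff {S : Set (EucSp N)} {x : EucSp N} :
    HasDensity S x 1 ↔ Tendsto (rat S x) (𝓝[>] (0:ℝ)) (𝓝 1) := by
  simp only [HasDensity, ENNReal.ofReal_one]; rfl

lemma vball_pos (x : EucSp N) {s : ℝ} (hs : 0 < s) : 0 < volume (ball x s) :=
  measure_ball_pos _ _ hs

lemma vball_ne_top (x : EucSp N) (s : ℝ) : volume (ball x s) ≠ ⊤ :=
  measure_ball_lt_top.ne

lemma rat_le_one {S : Set (EucSp N)} {x : EucSp N} {s : ℝ} : rat S x s ≤ 1 :=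
  ENNReal.div_le_of_le_mul (by rw [one_mul]; exact measure_mono inter_subset_right)

lemma rat_mono {S T : Set (EucSp N)} (h : S ⊆ T) (x : EucSp N) (s : ℝ) :
    rat S x s ≤ rat T x s :=
  ENNReal.div_le_div_right (measure_mono (inter_subset_inter_left _ h)) _

lemma rat_union_le (S T : Set (EucSp N)) (x : EucSp N) (s : ℝ) :
    rat (S ∪ T) x s ≤ rat S x s + rat T x s := by
  unfold rat
  rw [union_inter_distrib_right, ← ENNReal.add_div]
  exact ENNReal.div_le_div_right (measure_union_le _ _) _

lemma hasDensity_zero_of_subset {S T : Set (EucSp N)} {x : EucSp N} (h : S ⊆ T)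
    (hT : HasDensity T x 0) : HasDensity S x 0 := by
  rw [hasDensity_zero_iff] at *
  exact tendsto_of_tendsto_of_tendsto_of_le_of_le tendsto_const_nhds hT
    (fun s => zero_le) (fun s => rat_mono h x s)

lemma hasDensity_zero_union {S T : Set (EucSp N)} {x : EucSp N}
    (hS : HasDensity S x 0) (hT : HasDensity T x 0) : HasDensity (S ∪ T) x 0 := by
  rw [hasDensity_zero_iff] at *
  have h2 : Tendsto (fun s => rat S x s + rat T x s) (𝓝[>] (0:ℝ)) (𝓝 0) := by
    simpa using hS.add hT
  exact tendsto_of_tendsto_of_tendsto_of_le_of_le tendsto_const_nhds h2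
    (fun s => zero_le) (fun s => rat_union_le S T x s)

lemma hasDensity_zero_of_null {S : Set (EucSp N)} (h : volume S = 0) (x : EucSp N) :
    HasDensity S x 0 := by
  rw [hasDensity_zero_iff]
  have h2 : ∀ s : ℝ, rat S x s = 0 := fun s => by
    unfold rat
    rw [measure_mono_null inter_subset_left h, ENNReal.zero_div]
  have h3 : rat S x = fun _ => 0 := funext h2
  rw [h3]
  exact tendsto_const_nhds

lemma hasDensity_one_of_subset {S T : Set (EucSp N)} {x : EucSp N} (h : S ⊆ T)
    (hS : HasDensity S x 1) : HasDensity T x 1 := by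
  rw [hasDensity_one_iff] at *
  refine tendsto_of_tendsto_of_tendsto_of_le_of_le hS tendsto_const_nhds
    (fun s => rat_mono h x s) (fun s => rat_le_one)

lemma rat_add_compl {S : Set (EucSp N)} (hS : MeasurableSet S) (x : EucSp N) {s : ℝ}
    (hs : 0 < s) : rat S x s + rat Sᶜ x s = 1 := by
  unfold rat
  rw [ENNReal.div_add_div_same, inter_comm S, inter_comm Sᶜ, ← Set.diff_eq,
    measure_inter_add_diff (ball x s) hS,
    ENNReal.div_self (vball_pos x hs).ne' (vball_ne_top x s)]

lemma rat_ne_top {S : Set (EucSp N)} {x : EucSp N} {s : ℝ} : rat S x s ≠ ⊤ :=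
  (lt_of_le_of_lt rat_le_one ENNReal.one_lt_top).ne

lemma hasDensity_one_iff_compl {S : Set (EucSp N)} (hS : MeasurableSet S) {x : EucSp N} :
    HasDensity S x 1 ↔ HasDensity Sᶜ x 0 := by
  rw [hasDensity_one_iff, hasDensity_zero_iff]
  have hev : ∀ᶠ s in 𝓝[>] (0:ℝ), rat S x s + rat Sᶜ x s = 1 := by
    filter_upwards [self_mem_nhdsWithin] with s hs
    exact rat_add_compl hS x hs
  constructor
  · intro h
    have h2 : Tendsto (fun s => 1 - rat S x s) (𝓝[>] (0:ℝ)) (𝓝 (1 - 1)) :=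
      ENNReal.Tendsto.sub tendsto_const_nhds h (Or.inl ENNReal.one_ne_top)
    rw [tsub_self] at h2
    refine Tendsto.congr' ?_ h2
    filter_upwards [hev] with s hs
    exact (ENNReal.eq_sub_of_add_eq rat_ne_top (by rw [add_comm]; exact hs)).symm
  · intro h
    have h2 : Tendsto (fun s => 1 - rat Sᶜ x s) (𝓝[>] (0:ℝ)) (𝓝 (1 - 0)) :=
      ENNReal.Tendsto.sub tendsto_const_nhds h (Or.inl ENNReal.one_ne_top)
    rw [tsub_zero] at h2
    refine Tendsto.congr' ?_ h2
    filter_upwards [hev] with s hs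
    exact (ENNReal.eq_sub_of_add_eq rat_ne_top hs).symm

lemma hasDensity_one_inter {S T : Set (EucSp N)} (hSm : MeasurableSet S)
    (hTm : MeasurableSet T) {x : EucSp N} (hS : HasDensity S x 1) (hT : HasDensity T x 1) :
    HasDensity (S ∩ T) x 1 := by
  rw [hasDensity_one_iff_compl (hSm.inter hTm)]
  rw [hasDensity_one_iff_compl hSm] at hS
  rw [hasDensity_one_iff_compl hTm] at hT
  rw [Set.compl_inter]
  exact hasDensity_zero_union hS hT

lemma not_hasDensity_one_both {S T : Set (EucSp N)} (hTm : MeasurableSet T)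
    (hd : Disjoint S T) {x : EucSp N} (hS : HasDensity S x 1) (hT : HasDensity T x 1) :
    False := by
  have hle : ∀ᶠ s in 𝓝[>] (0:ℝ), rat S x s + rat T x s ≤ 1 := by
    filter_upwards [self_mem_nhdsWithin] with s hs
    have hst : volume (S ∩ ball x s) + volume (T ∩ ball x s) ≤ volume (ball x s) := by
      rw [← measure_union (hd.mono inter_subset_left inter_subset_left)
        (hTm.inter measurableSet_ball)]
      exact measure_mono (union_subset inter_subset_right inter_subset_right)
    calc rat S x s + rat T x s
        = (volume (S ∩ ball x s) + volume (T ∩ ball x s)) / volume (ball x s) :=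
          ENNReal.div_add_div_same
      _ ≤ volume (ball x s) / volume (ball x s) := ENNReal.div_le_div_right hst _
      _ ≤ 1 := ENNReal.div_self_le_one
  have h2 : Tendsto (fun s => rat S x s + rat T x s) (𝓝[>] (0:ℝ)) (𝓝 2) := by
    have := (hasDensity_one_iff.1 hS).add (hasDensity_one_iff.1 hT)
    simpa [one_add_one_eq_two] using this
  have : (2:ℝ≥0∞) ≤ 1 := le_of_tendsto h2 hle
  norm_num at this

lemma hasDensity_congr_of_eventuallyEq {S T : Set (EucSp N)} {x : EucSp N}
    (h : ∀ᶠ s in 𝓝[>] (0:ℝ), volume (S ∩ ball x s) = volume (T ∩ ball x s)) (α : ℝ) :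
    HasDensity S x α ↔ HasDensity T x α := by
  unfold HasDensity
  exact tendsto_congr' (by filter_upwards [h] with s hs; rw [hs])

lemma essBdry_mem_congr {S T : Set (EucSp N)} {x : EucSp N}
    (h : ∀ᶠ s in 𝓝[>] (0:ℝ), volume (S ∩ ball x s) = volume (T ∩ ball x s)) :
    x ∈ essBdry S ↔ x ∈ essBdry T := by
  unfold essBdry
  simp only [mem_setOf_eq, hasDensity_congr_of_eventuallyEq h]

lemma density_or {S : Set (EucSp N)} {y : EucSp N} (h : y ∉ essBdry S) :
    HasDensity S y 0 ∨ HasDensity S y 1 := by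
  by_contra hc
  push_neg at hc
  exact h ⟨hc.1, hc.2⟩

lemma hasDensity_zero_biUnion {ι : Type*} [DecidableEq ι] (t : Finset ι)
    (f : ι → Set (EucSp N)) {x : EucSp N}
    (h : ∀ j ∈ t, HasDensity (f j) x 0) : HasDensity (⋃ j ∈ t, f j) x 0 := by
  induction t using Finset.induction with
  | empty => simpa using hasDensity_zero_of_null (by simp) x
  | @insert a t ha ih =>
    rw [Finset.set_biUnion_insert]
    exact hasDensity_zero_union (h a (Finset.mem_insert_self a t))
      (ih fun j hj => h j (Finset.mem_insert_of_mem hj))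

lemma measurable_volInterBall {S : Set (EucSp N)} (hS : MeasurableSet S) (q : ℝ) :
    Measurable fun y : EucSp N => volume (S ∩ ball y q) := by
  have h : ∀ y : EucSp N, S ∩ ball y q
      = Prod.mk y ⁻¹' {p : EucSp N × EucSp N | p.2 ∈ S ∧ dist p.2 p.1 < q} := by
    intro y; ext z; simp [Metric.mem_ball]
  simp_rw [h]
  apply measurable_measure_prodMk_left
  apply MeasurableSet.inter
  · exact measurable_snd hS
  · exact (isOpen_lt (by fun_prop : Continuous fun p : EucSp N × EucSp N => dist p.2 p.1)
      continuous_const).measurableSet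

lemma vball_eq (y : EucSp N) {s : ℝ} (hs : 0 < s) :
    volume (ball y s) = ENNReal.ofReal (s ^ N) * volume (ball (0:EucSp N) 1) := by
  rw [Measure.addHaar_ball_of_pos _ _ hs, finrank_euclideanSpace_fin]

lemma measurable_rat {S : Set (EucSp N)} (hS : MeasurableSet S) (q : ℝ) :
    Measurable fun y : EucSp N => rat S y q := by
  apply Measurable.div (measurable_volInterBall hS q)
  by_cases hq : 0 < q
  · have h : (fun y : EucSp N => volume (ball y q))
        = fun _ => ENNReal.ofReal (q ^ N) * volume (ball (0:EucSp N) 1) :=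
      funext fun y => vball_eq y hq
    rw [h]; exact measurable_const
  · have h : (fun y : EucSp N => volume (ball y q)) = fun _ => 0 :=
      funext fun y => by rw [ball_eq_empty.2 (not_lt.1 hq), measure_empty]
    rw [h]; exact measurable_const

lemma vball_ratio (y : EucSp N) {s q : ℝ} (hs : 0 < s) (hq : 0 < q) (h2 : q ≤ 2 * s) :
    volume (ball y q) ≤ 2 ^ N * volume (ball y s) := by
  rw [vball_eq y hq, vball_eq y hs, ← mul_assoc]
  apply mul_le_mul_left
  have hle : (q:ℝ) ^ N ≤ 2 ^ N * s ^ N := by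
    calc q ^ N ≤ (2 * s) ^ N := pow_le_pow_left₀ hq.le h2 N
      _ = 2 ^ N * s ^ N := mul_pow 2 s N
  calc ENNReal.ofReal (q ^ N) ≤ ENNReal.ofReal (2 ^ N * s ^ N) := ENNReal.ofReal_le_ofReal hle
    _ = ENNReal.ofReal ((2:ℝ) ^ N) * ENNReal.ofReal (s ^ N) :=
        ENNReal.ofReal_mul (by positivity)
    _ = 2 ^ N * ENNReal.ofReal (s ^ N) := by
        congr 1
        rw [ENNReal.ofReal_pow (by norm_num : (0:ℝ) ≤ 2)]
        norm_num

lemma hasDensity_zero_iff_rat' {S : Set (EucSp N)} {y : EucSp N} :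
    HasDensity S y 0 ↔ ∀ n : ℕ, ∃ m : ℕ, ∀ q : ℚ, 0 < (q:ℝ) → (q:ℝ) < 1/(m+1) →
      rat S y q ≤ ((n:ℝ≥0∞)+1)⁻¹ := by
  rw [hasDensity_zero_iff, ENNReal.tendsto_nhds_zero]
  constructor
  · intro h n
    have hε : (0:ℝ≥0∞) < ((n:ℝ≥0∞)+1)⁻¹ := ENNReal.inv_pos.2 (by simp)
    have hev := h _ hε
    obtain ⟨u, hu, hsub⟩ := mem_nhdsGT_iff_exists_Ioo_subset.1 hev
    obtain ⟨m, hm⟩ := exists_nat_one_div_lt (show (0:ℝ) < u from hu)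
    exact ⟨m, fun q hq0 hq1 => hsub ⟨hq0, lt_trans hq1 hm⟩⟩
  · intro h ε hε
    obtain ⟨n, hn⟩ : ∃ n : ℕ, (2:ℝ≥0∞) ^ N * ((n:ℝ≥0∞)+1)⁻¹ ≤ ε := by
      obtain ⟨n, hn⟩ := ENNReal.exists_inv_nat_lt
        (ENNReal.div_pos hε.ne' (by simp : (2:ℝ≥0∞) ^ N ≠ ⊤)).ne'
      refine ⟨n, ?_⟩
      have h1 : ((n:ℝ≥0∞)+1)⁻¹ ≤ (n:ℝ≥0∞)⁻¹ :=
        ENNReal.inv_le_inv.2 (le_add_right le_rfl)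
      have h2 : ((n:ℝ≥0∞)+1)⁻¹ ≤ ε / 2 ^ N := le_trans h1 hn.le
      rw [mul_comm]
      exact (ENNReal.le_div_iff_mul_le (Or.inl (by simp)) (Or.inl (by simp))).1 h2
    obtain ⟨m, hm⟩ := h n
    have hδ : (0:ℝ) < 1 / (2 * (m + 1)) := by positivity
    refine mem_of_superset (Ioo_mem_nhdsGT_of_mem ⟨le_refl (0:ℝ), hδ⟩) ?_
    intro s hs
    obtain ⟨hs0, hs1⟩ := hs
    obtain ⟨q, hq1, hq2⟩ := exists_rat_btwn (show s < 2 * s by linarith)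
    have hq0 : 0 < (q:ℝ) := lt_trans hs0 hq1
    have hqlt : (q:ℝ) < 1 / (m + 1) := by
      have : (2:ℝ) * s < 2 * (1 / (2 * (m + 1))) := by linarith
      have h2 : (2:ℝ) * (1 / (2 * (m + 1))) = 1 / (m + 1) := by
        field_simp
      linarith [hq2, this, h2.le]
    have hratq := hm q hq0 hqlt
    have hnum : volume (S ∩ ball y s) ≤ volume (S ∩ ball y q) :=
      measure_mono (inter_subset_inter_right _ (ball_subset_ball hq1.le))
    have hden : volume (ball y q) ≤ 2 ^ N * volume (ball y s) :=
      vball_ratio y hs0 hq0 hq2.le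
    have hnum_q : volume (S ∩ ball y q) ≤ ((n:ℝ≥0∞)+1)⁻¹ * volume (ball y q) :=
      (ENNReal.div_le_iff (vball_pos y hq0).ne' (vball_ne_top y q)).1 hratq
    have hfin : volume (S ∩ ball y s)
        ≤ (2 ^ N * ((n:ℝ≥0∞)+1)⁻¹) * volume (ball y s) := by
      calc volume (S ∩ ball y s) ≤ ((n:ℝ≥0∞)+1)⁻¹ * volume (ball y q) :=
            le_trans hnum hnum_q
        _ ≤ ((n:ℝ≥0∞)+1)⁻¹ * (2 ^ N * volume (ball y s)) := mul_le_mul_right hden _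
        _ = (2 ^ N * ((n:ℝ≥0∞)+1)⁻¹) * volume (ball y s) := by ring
    calc rat S y s ≤ 2 ^ N * ((n:ℝ≥0∞)+1)⁻¹ := ENNReal.div_le_of_le_mul hfin
      _ ≤ ε := hn

lemma measurableSet_density_zero {S : Set (EucSp N)} (hS : MeasurableSet S) :
    MeasurableSet {y : EucSp N | HasDensity S y 0} := by
  have h : {y : EucSp N | HasDensity S y 0} =
      ⋂ n : ℕ, ⋃ m : ℕ, ⋂ q : ℚ,
        {y | 0 < (q:ℝ) → (q:ℝ) < 1/(m+1) → rat S y q ≤ ((n:ℝ≥0∞)+1)⁻¹} := by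
    ext y
    simp only [mem_setOf_eq, mem_iInter, mem_iUnion, hasDensity_zero_iff_rat']
  rw [h]
  refine MeasurableSet.iInter fun n => MeasurableSet.iUnion fun m =>
    MeasurableSet.iInter fun q => ?_
  by_cases h1 : 0 < (q:ℝ)
  · by_cases h2 : (q:ℝ) < 1/(m+1)
    · simp only [h1, h2, forall_const]
      exact measurableSet_le (measurable_rat hS q) measurable_const
    · simp only [h2, IsEmpty.forall_iff, implies_true, setOf_true, MeasurableSet.univ]
  · simp only [h1, IsEmpty.forall_iff, setOf_true, MeasurableSet.univ]

lemma measurableSet_density_one {S : Set (EucSp N)} (hS : MeasurableSet S) :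
    MeasurableSet {y : EucSp N | HasDensity S y 1} := by
  have h : {y : EucSp N | HasDensity S y 1} = {y | HasDensity Sᶜ y 0} :=
    Set.ext fun y => hasDensity_one_iff_compl hS
  rw [h]
  exact measurableSet_density_zero hS.compl

lemma measurableSet_essBdry {S : Set (EucSp N)} (hS : MeasurableSet S) :
    MeasurableSet (essBdry S) := by
  have h : essBdry S = ({y | HasDensity S y 0} ∪ {y | HasDensity S y 1})ᶜ := by
    ext y
    simp only [essBdry, mem_setOf_eq, mem_compl_iff, mem_union]
    tauto
  rw [h]
  exact ((measurableSet_density_zero hS).union (measurableSet_density_one hS)).compl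

lemma sum_measure_le_of_disjoint {ι : Type*} [DecidableEq ι] (μ : Measure (EucSp N))
    (t : Finset ι) (U : ι → Set (EucSp N)) (hU : ∀ j ∈ t, MeasurableSet (U j))
    (hd : ∀ j ∈ t, ∀ l ∈ t, j ≠ l → Disjoint (U j) (U l))
    (C : ι → Set (EucSp N)) (hC : ∀ j ∈ t, C j ⊆ U j) :
    ∑ j ∈ t, μ (C j) ≤ μ (⋃ j ∈ t, C j) := by
  induction t using Finset.induction with
  | empty => simp
  | @insert a t ha ih =>
    rw [Finset.sum_insert ha, Finset.set_biUnion_insert]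
    have key := measure_inter_add_diff (μ := μ) (C a ∪ ⋃ j ∈ t, C j)
      (hU a (Finset.mem_insert_self a t))
    rw [← key]
    apply add_le_add
    · exact measure_mono (subset_inter subset_union_left (hC a (Finset.mem_insert_self a t)))
    · refine le_trans (ih (fun j hj => hU j (Finset.mem_insert_of_mem hj))
        (fun j hj l hl hne => hd j (Finset.mem_insert_of_mem hj) l
          (Finset.mem_insert_of_mem hl) hne)
        (fun j hj => hC j (Finset.mem_insert_of_mem hj))) (measure_mono ?_)
      intro z hz
      simp only [mem_iUnion, exists_prop] at hz
      obtain ⟨j, hj, hzj⟩ := hz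
      refine ⟨subset_union_right (by simpa using ⟨j, hj, hzj⟩), ?_⟩
      intro hzU
      have hdaj := hd a (Finset.mem_insert_self a t) j (Finset.mem_insert_of_mem hj)
        (fun he => ha (he ▸ hj))
      exact (Set.disjoint_left.1 hdaj) hzU (hC j (Finset.mem_insert_of_mem hj) hzj)
lemma essBdry_inter_subset {S T : Set (EucSp N)} (hS : MeasurableSet S)
    (hT : MeasurableSet T) : essBdry (S ∩ T) ⊆ essBdry S ∪ essBdry T := by
  intro y hy
  by_contra h
  simp only [mem_union, not_or] at h
  rcases density_or h.1 with h0 | h1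
  · exact hy.1 (hasDensity_zero_of_subset inter_subset_left h0)
  rcases density_or h.2 with h0 | h1'
  · exact hy.1 (hasDensity_zero_of_subset inter_subset_right h0)
  · exact hy.2 (hasDensity_one_inter hS hT h1 h1')


end CheegerAux

/- **Statement 5.** If `(E_1,…,E_k)` is a `1`-adjusted Cheeger `k`-tuple of a bounded open
set `Ω`, then each `M_i = ⋃_{j ≠ i} E_j` has distributional mean curvature bounded from above
by `h_k(Ω)` in `Ω`. -/
open CheegerAux in
set_option maxHeartbeats 1000000 in
/-- If `(E_1,…,E_k)` is a `1`-adjusted Cheeger `k`-tuple of a bounded open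
set `Ω`, then each `M_i = ⋃_{j ≠ i} E_j` has distributional mean curvature bounded from above
by `h_k(Ω)` in `Ω`. -/
theorem union_complement_mean_curvature_bound {N : ℕ} (Ω : Set (EucSp N))
    (hΩo : IsOpen Ω) (hΩb : Bornology.IsBounded Ω) (k : ℕ) (hk : 1 ≤ k)
    (E : Fin k → Set (EucSp N)) (hE : IsAdjusted 1 Ω k E) (i : Fin k)
    (x : EucSp N) (r : ℝ) (hr : 0 < r) (hr' : ENNReal.ofReal r < (cheegerK k Ω)⁻¹)
    (hball : closure (ball x r) ⊆ Ω)
    (L : Set (EucSp N)) (hLm : MeasurableSet L) (hLp : perim L ≠ ⊤)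
    (hLM : L ⊆ ⋃ j, ⋃ (_ : j ≠ i), E j)
    (hcc : CompactlyContained ((⋃ j, ⋃ (_ : j ≠ i), E j) \ L) (ball x r)) :
    relPerim (⋃ j, ⋃ (_ : j ≠ i), E j) (ball x r) ≤
      relPerim L (ball x r) +
        cheegerK k Ω * volume ((⋃ j, ⋃ (_ : j ≠ i), E j) \ L) := by
  classical
  obtain ⟨⟨⟨hsub, hmeas, hpos, hdisj⟩, hsup⟩, hadj⟩ :
      (AdmissibleTuple Ω E ∧ (⨆ i, perim (E i) / volume (E i)) = cheegerK k Ω) ∧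
      ∀ i, cheeger (Ω \ ⋃ j, ⋃ (_ : j ≠ i), E j) = cheeger (E i) ∧
        cheeger (E i) = perim (E i) / volume (E i) := hE
  set B : Set (EucSp N) := ball x r with hB
  set M : Set (EucSp N) := ⋃ j, ⋃ (_ : j ≠ i), E j with hMdef
  set J : Finset (Fin k) := Finset.univ.erase i with hJdef
  set c : ℝ≥0∞ := cheegerK k Ω with hcdef
  obtain ⟨K, hKc, hKB, hKnull⟩ := hcc
  set μ : Measure (EucSp N) := μH[(N:ℝ) - 1] with hμdef
  -- basic facts
  have hMJ : M = ⋃ j ∈ J, E j := by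
    simp only [hMdef, hJdef]
    ext z
    simp only [mem_iUnion, exists_prop, Finset.mem_erase, Finset.mem_univ, and_true]
  have hEM : ∀ j ∈ J, E j ⊆ M := by
    intro j hj
    rw [hMJ]
    exact subset_biUnion_of_mem hj
  have hc_ne_top : c ≠ ⊤ := by
    intro hc
    rw [hc, ENNReal.inv_top] at hr'
    exact absurd hr' (by simp)
  have hvol_lt : ∀ j, volume (E j) < ⊤ :=
    fun j => lt_of_le_of_lt (measure_mono (hsub j)) hΩb.measure_lt_top
  have hratio_le : ∀ j, perim (E j) / volume (E j) ≤ c := by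
    intro j
    rw [← hsup]
    exact le_iSup (fun j => perim (E j) / volume (E j)) j
  have hperimE_eq : ∀ j, perim (E j) = perim (E j) / volume (E j) * volume (E j) :=
    fun j => (ENNReal.div_mul_cancel (hpos j).ne' (hvol_lt j).ne).symm
  have hperimE_ne_top : ∀ j, perim (E j) ≠ ⊤ := by
    intro j
    rw [hperimE_eq j]
    exact (ENNReal.mul_lt_top (lt_of_le_of_lt (hratio_le j) (lt_top_iff_ne_top.2 hc_ne_top))
      (hvol_lt j)).ne
  -- global minimality inequality
  have hglob : ∀ j, perim (E j) ≤ perim (E j ∩ L) + c * volume (E j \ L) := by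
    intro j
    by_cases hv : volume (E j ∩ L) = 0
    · calc perim (E j) = perim (E j) / volume (E j) * volume (E j) := hperimE_eq j
        _ ≤ c * volume (E j) := mul_le_mul_left (hratio_le j) _
        _ = c * volume (E j \ L) := by
            rw [← measure_inter_add_diff (E j) hLm, hv, zero_add]
        _ ≤ perim (E j ∩ L) + c * volume (E j \ L) := le_add_self
    · have hch : cheeger (E j) ≤ perim (E j ∩ L) / volume (E j ∩ L) := by
        refine iInf_le_of_le (E j ∩ L) (iInf_le_of_le inter_subset_left
          (iInf_le_of_le ((hmeas j).inter hLm)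
          (iInf_le_of_le (pos_iff_ne_zero.2 hv) le_rfl)))
      rw [(hadj j).2] at hch
      have hSv0 : volume (E j ∩ L) ≠ 0 := hv
      have hSvt : volume (E j ∩ L) ≠ ⊤ :=
        (lt_of_le_of_lt (measure_mono inter_subset_left) (hvol_lt j)).ne
      have h1 : perim (E j) / volume (E j) * volume (E j ∩ L) ≤ perim (E j ∩ L) := by
        calc perim (E j) / volume (E j) * volume (E j ∩ L)
            ≤ perim (E j ∩ L) / volume (E j ∩ L) * volume (E j ∩ L) :=
              mul_le_mul_left hch _
          _ = perim (E j ∩ L) := ENNReal.div_mul_cancel hSv0 hSvt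
      calc perim (E j) = perim (E j) / volume (E j) * volume (E j) := hperimE_eq j
        _ = perim (E j) / volume (E j) * (volume (E j ∩ L) + volume (E j \ L)) := by
            rw [measure_inter_add_diff (E j) hLm]
        _ = perim (E j) / volume (E j) * volume (E j ∩ L)
            + perim (E j) / volume (E j) * volume (E j \ L) := mul_add _ _ _
        _ ≤ perim (E j ∩ L) + c * volume (E j \ L) :=
            add_le_add h1 (mul_le_mul_left (hratio_le j) _)
  have hperimS_ne_top : ∀ j, perim (E j ∩ L) ≠ ⊤ := by
    intro j
    have h1 : perim (E j ∩ L) ≤ perim (E j) + perim L := by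
      refine le_trans (measure_mono (essBdry_inter_subset (hmeas j) hLm)) (measure_union_le _ _)
    exact (lt_of_le_of_lt h1 (ENNReal.add_lt_top.2
      ⟨lt_top_iff_ne_top.2 (hperimE_ne_top j), lt_top_iff_ne_top.2 hLp⟩)).ne
  -- localization: essential boundaries of E j and E j ∩ L agree outside K
  have hloc : ∀ j ∈ J, ∀ y : EucSp N, y ∉ K →
      (y ∈ essBdry (E j) ↔ y ∈ essBdry (E j ∩ L)) := by
    intro j hj y hy
    apply essBdry_mem_congr
    obtain ⟨ε, hε, hballK⟩ := Metric.isOpen_iff.1 hKc.isClosed.isOpen_compl y hy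
    filter_upwards [Ioo_mem_nhdsGT_of_mem ⟨le_refl (0:ℝ), hε⟩] with s hs
    have hDnull : volume ((E j \ L) ∩ ball y s) = 0 := by
      refine measure_mono_null ?_ hKnull
      intro z hz
      refine ⟨⟨hEM j hj hz.1.1, hz.1.2⟩, ?_⟩
      intro hzK
      exact (hballK (ball_subset_ball hs.2.le hz.2)) hzK
    refine le_antisymm ?_ (measure_mono (inter_subset_inter_left _ inter_subset_left))
    calc volume (E j ∩ ball y s)
        ≤ volume ((E j ∩ L ∩ ball y s) ∪ ((E j \ L) ∩ ball y s)) := by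
          refine measure_mono ?_
          intro z hz
          by_cases hzL : z ∈ L
          · exact Or.inl ⟨⟨hz.1, hzL⟩, hz.2⟩
          · exact Or.inr ⟨⟨hz.1, hzL⟩, hz.2⟩
      _ ≤ volume (E j ∩ L ∩ ball y s) + volume ((E j \ L) ∩ ball y s) := measure_union_le _ _
      _ = volume (E j ∩ L ∩ ball y s) := by rw [hDnull, add_zero]
  -- localized minimality
  have hloc' : ∀ j ∈ J, μ (essBdry (E j) ∩ B) ≤ μ (essBdry (E j ∩ L) ∩ B)
      + c * volume (E j \ L) := by
    intro j hj
    have hsetEq : essBdry (E j) \ B = essBdry (E j ∩ L) \ B := by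
      ext y
      constructor
      · rintro ⟨hy1, hy2⟩
        exact ⟨(hloc j hj y (fun hyK => hy2 (hKB hyK))).1 hy1, hy2⟩
      · rintro ⟨hy1, hy2⟩
        exact ⟨(hloc j hj y (fun hyK => hy2 (hKB hyK))).2 hy1, hy2⟩
    have hdecE : μ (essBdry (E j) ∩ B) + μ (essBdry (E j) \ B) = perim (E j) :=
      measure_inter_add_diff _ measurableSet_ball
    have hdecS : μ (essBdry (E j ∩ L) ∩ B) + μ (essBdry (E j ∩ L) \ B) = perim (E j ∩ L) :=
      measure_inter_add_diff _ measurableSet_ball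
    have ht_ne : μ (essBdry (E j ∩ L) \ B) ≠ ⊤ :=
      (lt_of_le_of_lt (measure_mono diff_subset)
        (lt_top_iff_ne_top.2 (hperimS_ne_top j))).ne
    have hkey : μ (essBdry (E j) ∩ B) + μ (essBdry (E j ∩ L) \ B)
        ≤ (μ (essBdry (E j ∩ L) ∩ B) + c * volume (E j \ L))
          + μ (essBdry (E j ∩ L) \ B) := by
      calc μ (essBdry (E j) ∩ B) + μ (essBdry (E j ∩ L) \ B)
          = μ (essBdry (E j) ∩ B) + μ (essBdry (E j) \ B) := by rw [hsetEq]
        _ = perim (E j) := hdecE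
        _ ≤ perim (E j ∩ L) + c * volume (E j \ L) := hglob j
        _ = μ (essBdry (E j ∩ L) ∩ B) + μ (essBdry (E j ∩ L) \ B)
            + c * volume (E j \ L) := by rw [hdecS]
        _ = (μ (essBdry (E j ∩ L) ∩ B) + c * volume (E j \ L))
            + μ (essBdry (E j ∩ L) \ B) := by ring
    exact ENNReal.le_of_add_le_add_right ht_ne hkey
  -- notation for the exposed parts
  set A0 : Fin k → Set (EucSp N) :=
    fun j => essBdry (E j) ∩ {y | HasDensity (E j ∩ L) y 0} ∩ B with hA0def
  set X : Fin k → Set (EucSp N) :=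
    fun j => essBdry L ∩ {y | HasDensity (E j) y 1} ∩ B with hXdef
  -- (b): disjoint decomposition of the relative perimeter of E j
  have hb : ∀ j, μ (A0 j) + μ (essBdry (E j) ∩ essBdry (E j ∩ L) ∩ B)
      ≤ μ (essBdry (E j) ∩ B) := by
    intro j
    have key := measure_inter_add_diff (μ := μ) (essBdry (E j) ∩ B)
      (measurableSet_essBdry ((hmeas j).inter hLm))
    rw [← key, add_comm (μ (essBdry (E j) ∩ B ∩ essBdry (E j ∩ L)))]
    apply add_le_add
    · refine measure_mono ?_
      rintro y ⟨⟨hyE, hy0⟩, hyB⟩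
      exact ⟨⟨hyE, hyB⟩, fun hyS => hyS.1 hy0⟩
    · refine measure_mono ?_
      rintro y ⟨⟨hyE, hyS⟩, hyB⟩
      exact ⟨⟨hyE, hyB⟩, hyS⟩
  -- boundary of E j ∩ L splits into interface with E j and a part of ∂L
  have hss : ∀ j, μ (essBdry (E j ∩ L) ∩ B)
      ≤ μ (essBdry (E j) ∩ essBdry (E j ∩ L) ∩ B) + μ (X j) := by
    intro j
    have hincl : essBdry (E j ∩ L) ∩ B
        ⊆ (essBdry (E j) ∩ essBdry (E j ∩ L) ∩ B) ∪ X j := by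
      rintro y ⟨hyS, hyB⟩
      by_cases hyE : y ∈ essBdry (E j)
      · exact Or.inl ⟨⟨hyE, hyS⟩, hyB⟩
      rcases density_or hyE with h0 | h1
      · exact absurd (hasDensity_zero_of_subset inter_subset_left h0) hyS.1
      by_cases hyL : y ∈ essBdry L
      · exact Or.inr ⟨⟨hyL, h1⟩, hyB⟩
      rcases density_or hyL with hL0 | hL1
      · exact absurd (hasDensity_zero_of_subset inter_subset_right hL0) hyS.1
      · exact absurd (hasDensity_one_inter (hmeas j) hLm h1 hL1) hyS.2
    exact le_trans (measure_mono hincl) (measure_union_le _ _)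
  -- per-index bound on the exposed boundary
  have hP2 : ∀ j ∈ J, μ (A0 j) ≤ μ (X j) + c * volume (E j \ L) := by
    intro j hj
    have ht_ne : μ (essBdry (E j) ∩ essBdry (E j ∩ L) ∩ B) ≠ ⊤ := by
      refine (lt_of_le_of_lt (measure_mono ?_) (lt_top_iff_ne_top.2 (hperimS_ne_top j))).ne
      exact fun y hy => hy.1.2
    have hchain : μ (A0 j) + μ (essBdry (E j) ∩ essBdry (E j ∩ L) ∩ B)
        ≤ (μ (X j) + c * volume (E j \ L))
          + μ (essBdry (E j) ∩ essBdry (E j ∩ L) ∩ B) := by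
      calc μ (A0 j) + μ (essBdry (E j) ∩ essBdry (E j ∩ L) ∩ B)
          ≤ μ (essBdry (E j) ∩ B) := hb j
        _ ≤ μ (essBdry (E j ∩ L) ∩ B) + c * volume (E j \ L) := hloc' j hj
        _ ≤ (μ (essBdry (E j) ∩ essBdry (E j ∩ L) ∩ B) + μ (X j))
            + c * volume (E j \ L) := add_le_add_left (hss j) _
        _ = (μ (X j) + c * volume (E j \ L))
            + μ (essBdry (E j) ∩ essBdry (E j ∩ L) ∩ B) := by ring
    exact ENNReal.le_of_add_le_add_right ht_ne hchain
  -- density-one points of E j are interior to M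
  have hX_perp : ∀ j ∈ J, ∀ y : EucSp N, HasDensity (E j) y 1 → y ∉ essBdry M := by
    intro j hj y h1 hyM
    exact hyM.2 (hasDensity_one_of_subset (hEM j hj) h1)
  -- master inclusion
  have hmaster : (essBdry M ∩ B) \ essBdry L ⊆ ⋃ j ∈ J, A0 j := by
    rintro y ⟨⟨hyM, hyB⟩, hyL⟩
    rcases density_or hyL with hL0 | hL1
    · have hEj : ∃ j ∈ J, y ∈ essBdry (E j) := by
        by_contra hno
        push_neg at hno
        by_cases hone : ∃ j ∈ J, HasDensity (E j) y 1
        · obtain ⟨j, hj, h1⟩ := hone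
          exact hX_perp j hj y h1 hyM
        · push_neg at hone
          have hall : ∀ j ∈ J, HasDensity (E j) y 0 := by
            intro j hj
            rcases density_or (hno j hj) with h0 | h1
            · exact h0
            · exact absurd h1 (hone j hj)
          exact hyM.1 (hMJ ▸ hasDensity_zero_biUnion J E hall)
      obtain ⟨j, hj, hyE⟩ := hEj
      refine mem_biUnion hj ⟨⟨hyE, ?_⟩, hyB⟩
      exact hasDensity_zero_of_subset inter_subset_right hL0
    · exact absurd (hasDensity_one_of_subset hLM hL1) hyM.2
  -- the ∂L-pieces are essentially disjoint
  have hfin : μ (essBdry M ∩ B ∩ essBdry L) + ∑ j ∈ J, μ (X j)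
      ≤ μ (essBdry L ∩ B) := by
    set V : Set (EucSp N) := ⋃ j ∈ J, {y | HasDensity (E j) y 1} with hVdef
    have hVm : MeasurableSet V :=
      MeasurableSet.biUnion J.countable_toSet fun j _ => measurableSet_density_one (hmeas j)
    have key := measure_inter_add_diff (μ := μ) (essBdry L ∩ B) hVm
    rw [← key, add_comm (μ (essBdry L ∩ B ∩ V))]
    apply add_le_add
    · refine measure_mono ?_
      rintro y ⟨⟨hyM, hyB⟩, hyL⟩
      refine ⟨⟨hyL, hyB⟩, ?_⟩
      intro hyV
      simp only [hVdef, mem_iUnion, exists_prop, mem_setOf_eq] at hyV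
      obtain ⟨j, hj, h1⟩ := hyV
      exact hX_perp j hj y h1 hyM
    · have hsum : ∑ j ∈ J, μ (X j) ≤ μ (⋃ j ∈ J, X j) := by
        refine sum_measure_le_of_disjoint μ J (fun j => {y | HasDensity (E j) y 1})
          (fun j _ => measurableSet_density_one (hmeas j)) ?_ X ?_
        · intro j _ l _ hne
          rw [Set.disjoint_left]
          intro y hyj hyl
          exact not_hasDensity_one_both (hmeas l) (hdisj j l hne) hyj hyl
        · intro j _
          exact fun y hy => hy.1.2
      refine le_trans hsum (measure_mono ?_)
      intro y hy
      simp only [mem_iUnion, exists_prop] at hy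
      obtain ⟨j, hj, hyX⟩ := hy
      exact ⟨⟨hyX.1.1, hyX.2⟩, by
        simp only [hVdef, mem_iUnion, exists_prop, mem_setOf_eq]
        exact ⟨j, hj, hyX.1.2⟩⟩
  -- volume splitting
  have hvolsplit : ∑ j ∈ J, volume (E j \ L) = volume (M \ L) := by
    have hset : M \ L = ⋃ j ∈ J, (E j \ L) := by
      rw [hMJ]
      ext z
      simp only [mem_diff, mem_iUnion, exists_prop]
      constructor
      · rintro ⟨⟨j, hj, hz⟩, hzL⟩
        exact ⟨j, hj, hz, hzL⟩
      · rintro ⟨j, hj, hz, hzL⟩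
        exact ⟨⟨j, hj, hz⟩, hzL⟩
    have hpd : Set.PairwiseDisjoint (↑J : Set (Fin k)) (fun j => E j \ L) :=
      fun j _ l _ hne => (hdisj j l hne).mono diff_subset diff_subset
    rw [hset, measure_biUnion_finset hpd (fun j _ => (hmeas j).diff hLm)]
  -- final assembly
  have hLHS : relPerim M B ≤ μ (essBdry M ∩ B ∩ essBdry L)
      + (∑ j ∈ J, μ (X j) + c * volume (M \ L)) := by
    calc relPerim M B = μ (essBdry M ∩ B) := rfl
      _ ≤ μ (essBdry M ∩ B ∩ essBdry L) + μ ((essBdry M ∩ B) \ essBdry L) :=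
          measure_le_inter_add_diff μ _ _
      _ ≤ μ (essBdry M ∩ B ∩ essBdry L) + ∑ j ∈ J, μ (A0 j) := by
          refine add_le_add_right (le_trans (measure_mono hmaster) ?_) _
          exact measure_biUnion_finset_le J A0
      _ ≤ μ (essBdry M ∩ B ∩ essBdry L)
          + ∑ j ∈ J, (μ (X j) + c * volume (E j \ L)) := by
          refine add_le_add_right (Finset.sum_le_sum hP2) _
      _ = μ (essBdry M ∩ B ∩ essBdry L)
          + (∑ j ∈ J, μ (X j) + c * ∑ j ∈ J, volume (E j \ L)) := by
          rw [Finset.sum_add_distrib, Finset.mul_sum]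
      _ = μ (essBdry M ∩ B ∩ essBdry L)
          + (∑ j ∈ J, μ (X j) + c * volume (M \ L)) := by rw [hvolsplit]
  calc relPerim M B ≤ μ (essBdry M ∩ B ∩ essBdry L)
        + (∑ j ∈ J, μ (X j) + c * volume (M \ L)) := hLHS
    _ = (μ (essBdry M ∩ B ∩ essBdry L) + ∑ j ∈ J, μ (X j)) + c * volume (M \ L) := by
        rw [add_assoc]
    _ ≤ μ (essBdry L ∩ B) + c * volume (M \ L) := add_le_add_left hfin _
    _ = relPerim L B + c * volume (M \ L) := rfl

end
end

section
/- Let Ω ⊂ ℝ^N be a bounded open set and let (E_1,…,E_k) be a 1-adjusted Cheeger k-tuple of Ω. Then each E_i has distributional mean curvature bounded from above by h_k(Ω) in all of ℝ^N: for every i ∈ {1,…,k}, every open ball B_r ⊂ ℝ^N of radius r ∈ (0, 1/h_k(Ω)), and every set of finite perimeter L ⊆ E_i such that E_i ∖ L is compactly contained in B_r, one has P(E_i; B_r) ≤ P(L; B_r) + h_k(Ω)·|E_i ∖ L|. -/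
open MeasureTheory Metric Set Filter Topology
open scoped ENNReal symmDiff

noncomputable section

lemma essBdry_local {N : ℕ} {E L K : Set (EucSp N)} (hLE : L ⊆ E)
    (hnull : volume ((E \ L) \ K) = 0) (hK : IsClosed K) {y : EucSp N} (hy : y ∉ K) :
    (y ∈ essBdry E ↔ y ∈ essBdry L) := by
  obtain ⟨δ, hδ, hball⟩ := Metric.isOpen_iff.1 hK.isOpen_compl y hy
  have hev : ∀ᶠ s in 𝓝[>] (0:ℝ),
      volume (E ∩ ball y s) / volume (ball y s) = volume (L ∩ ball y s) / volume (ball y s) := by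
    filter_upwards [(gt_mem_nhds hδ).filter_mono nhdsWithin_le_nhds] with s hs
    have hsub : E ∩ ball y s ⊆ (L ∩ ball y s) ∪ ((E \ L) \ K) := by
      rintro z ⟨hzE, hzb⟩
      by_cases hzL : z ∈ L
      · exact Or.inl ⟨hzL, hzb⟩
      · exact Or.inr ⟨⟨hzE, hzL⟩, hball (mem_ball.2 (lt_trans (mem_ball.1 hzb) hs))⟩
    have h1 : volume (E ∩ ball y s) ≤ volume (L ∩ ball y s) := by
      calc volume (E ∩ ball y s) ≤ volume ((L ∩ ball y s) ∪ ((E \ L) \ K)) := measure_mono hsub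
        _ ≤ volume (L ∩ ball y s) + volume ((E \ L) \ K) := measure_union_le _ _
        _ = volume (L ∩ ball y s) := by rw [hnull, add_zero]
    have h2 : volume (L ∩ ball y s) ≤ volume (E ∩ ball y s) :=
      measure_mono (inter_subset_inter_left _ hLE)
    rw [le_antisymm h1 h2]
  have key : ∀ α : ℝ, (HasDensity E y α ↔ HasDensity L y α) := fun α => tendsto_congr' hev
  simp only [essBdry, Set.mem_setOf_eq, key]

/-- If `(E_1,…,E_k)` is a `1`-adjusted Cheeger `k`-tuple of a bounded open
set `Ω`, then each `E_i` has distributional mean curvature bounded from above by `h_k(Ω)`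
in all of `ℝ^N`. -/
theorem cheeger_set_mean_curvature_bound {N : ℕ} (Ω : Set (EucSp N))
    (hΩo : IsOpen Ω) (hΩb : Bornology.IsBounded Ω) (k : ℕ) (hk : 1 ≤ k)
    (E : Fin k → Set (EucSp N)) (hE : IsAdjusted 1 Ω k E) (i : Fin k)
    (x : EucSp N) (r : ℝ) (hr : 0 < r) (hr' : ENNReal.ofReal r < (cheegerK k Ω)⁻¹)
    (L : Set (EucSp N)) (hLm : MeasurableSet L) (hLp : perim L ≠ ⊤)
    (hLE : L ⊆ E i)
    (hcc : CompactlyContained (E i \ L) (ball x r)) :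
    relPerim (E i) (ball x r) ≤
      relPerim L (ball x r) + cheegerK k Ω * volume (E i \ L) := by
  obtain ⟨⟨⟨hsub, hmeas, hpos, hdisj⟩, hsup⟩, hadj⟩ := hE
  obtain ⟨h1, h2⟩ := hadj i
  obtain ⟨K, hKc, hKB, hKnull⟩ := hcc
  set h : ℝ≥0∞ := perim (E i) / volume (E i) with hh
  -- finiteness of volumes
  have hvolEi_top : volume (E i) ≠ ⊤ :=
    (lt_of_le_of_lt (measure_mono (hsub i)) hΩb.measure_lt_top).ne
  -- L is admissible in Ω' := Ω \ ⋃ j ≠ i, E j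
  have hLΩ' : L ⊆ Ω \ ⋃ j, ⋃ (_ : j ≠ i), E j := by
    intro z hz
    refine ⟨hsub i (hLE hz), ?_⟩
    simp only [Set.mem_iUnion, not_exists]
    intro j hj
    exact fun hzj => (Set.disjoint_left.1 (hdisj j i hj)) hzj (hLE hz)
  -- Cheeger bound: h * volume L ≤ perim L
  have hhL : h * volume L ≤ perim L := by
    rcases eq_or_lt_of_le (show (0:ℝ≥0∞) ≤ volume L from zero_le) with hL0 | hL0
    · rw [← hL0, mul_zero]; exact zero_le
    · have hcheeg : cheeger (Ω \ ⋃ j, ⋃ (_ : j ≠ i), E j) ≤ perim L / volume L := by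
        refine iInf_le_of_le L ?_
        exact iInf_le_of_le hLΩ' (iInf_le_of_le hLm (iInf_le_of_le hL0 le_rfl))
      have : h ≤ perim L / volume L := by rw [← h2, ← h1]; exact hcheeg
      exact ENNReal.mul_le_of_le_div this
  -- perim (E i) = h * vol L + h * vol (E i \ L)
  have hvolsplit : volume L + volume (E i \ L) = volume (E i) := by
    have := measure_inter_add_diff (μ := volume) (E i) hLm
    rwa [Set.inter_eq_right.2 hLE] at this
  have hperimEi : perim (E i) = h * volume L + h * volume (E i \ L) := by
    rw [← mul_add, hvolsplit, hh, ENNReal.div_mul_cancel (hpos i).ne' hvolEi_top]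
  have hglobal : perim (E i) ≤ perim L + h * volume (E i \ L) := by
    rw [hperimEi]; exact add_le_add hhL le_rfl
  -- locality: essential boundaries agree outside the ball
  have hbdry : essBdry (E i) \ ball x r = essBdry L \ ball x r := by
    ext y
    simp only [Set.mem_diff]
    constructor
    · rintro ⟨hy, hyb⟩
      exact ⟨(essBdry_local hLE hKnull hKc.isClosed (fun hyK => hyb (hKB hyK))).1 hy, hyb⟩
    · rintro ⟨hy, hyb⟩
      exact ⟨(essBdry_local hLE hKnull hKc.isClosed (fun hyK => hyb (hKB hyK))).2 hy, hyb⟩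
  -- split perimeters along the ball
  set μ : Measure (EucSp N) := μH[(N:ℝ) - 1]
  have hsplitE : relPerim (E i) (ball x r) + μ (essBdry (E i) \ ball x r) = perim (E i) :=
    measure_inter_add_diff _ measurableSet_ball
  have hsplitL : relPerim L (ball x r) + μ (essBdry L \ ball x r) = perim L :=
    measure_inter_add_diff _ measurableSet_ball
  set c : ℝ≥0∞ := μ (essBdry L \ ball x r) with hc
  have hcfin : c ≠ ⊤ := ((measure_mono Set.diff_subset).trans_lt (lt_top_iff_ne_top.2 hLp)).ne
  have hmain : relPerim (E i) (ball x r) + c ≤ (relPerim L (ball x r) + h * volume (E i \ L)) + c := by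
    calc relPerim (E i) (ball x r) + c = perim (E i) := by rw [hc, ← hbdry]; exact hsplitE
      _ ≤ perim L + h * volume (E i \ L) := hglobal
      _ = (relPerim L (ball x r) + c) + h * volume (E i \ L) := by rw [hsplitL]
      _ = (relPerim L (ball x r) + h * volume (E i \ L)) + c := by ring
  have hcancel : relPerim (E i) (ball x r) ≤ relPerim L (ball x r) + h * volume (E i \ L) :=
    (ENNReal.add_le_add_iff_right hcfin).1 hmain
  have hhk : h ≤ cheegerK k Ω := hsup ▸ le_iSup (fun j => perim (E j) / volume (E j)) i
  exact hcancel.trans (add_le_add le_rfl (mul_le_mul_left hhk _))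

end
end

section
/- Let Ω ⊂ ℝ^N be a bounded open set and let (E_1,…,E_k) be a 1-adjusted Cheeger k-tuple of Ω. Then each E_i is (Λ, r_0)-perimeter minimizing in Ω with Λ = h_k(Ω) and r_0 = 1/h_k(Ω): for every open ball B_r of radius r ∈ (0, 1/h_k(Ω)) whose closure is contained in Ω, and every set of finite perimeter F such that E_i △ F is compactly contained in B_r, one has P(E_i; B_r) ≤ P(F; B_r) + h_k(Ω)·|E_i △ F|. -/
open MeasureTheory Metric Set Filter Topology
open scoped ENNReal symmDiff

noncomputable section

-- aux lemmas part 1: density basics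
section Aux
variable {N : ℕ}

/-- ratio function -/
def dRatio (X : Set (EucSp N)) (z : EucSp N) (ρ : ℝ) : ℝ≥0∞ :=
  volume (X ∩ ball z ρ) / volume (ball z ρ)

lemma hasDensity_iff_dRatio {X : Set (EucSp N)} {z : EucSp N} {α : ℝ} :
    HasDensity X z α ↔ Tendsto (dRatio X z) (𝓝[>] (0:ℝ)) (𝓝 (ENNReal.ofReal α)) := Iff.rfl

lemma vol_eq_of_symmDiff_null {X Y : Set (EucSp N)} (h : volume (X ∆ Y) = 0) :
    volume X = volume Y := by
  apply le_antisymm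
  · calc volume X ≤ volume (Y ∪ X ∆ Y) := by
          apply measure_mono; intro z hz
          by_cases hy : z ∈ Y
          · exact Or.inl hy
          · exact Or.inr (Or.inl ⟨hz, hy⟩)
        _ ≤ volume Y + volume (X ∆ Y) := measure_union_le _ _
        _ = volume Y := by rw [h, add_zero]
  · calc volume Y ≤ volume (X ∪ X ∆ Y) := by
          apply measure_mono; intro z hz
          by_cases hy : z ∈ X
          · exact Or.inl hy
          · exact Or.inr (Or.inr ⟨hz, hy⟩)
        _ ≤ volume X + volume (X ∆ Y) := measure_union_le _ _
        _ = volume X := by rw [h, add_zero]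

lemma dRatio_le_one {X : Set (EucSp N)} {z : EucSp N} (ρ : ℝ) : dRatio X z ρ ≤ 1 := by
  rcases eq_or_ne (volume (ball z ρ)) 0 with h0 | h0
  · unfold dRatio
    rw [le_antisymm ((measure_mono inter_subset_right).trans h0.le) zero_le, h0]
    simp
  · unfold dRatio
    rw [ENNReal.div_le_iff_le_mul (Or.inl h0) (Or.inr one_ne_zero), one_mul]
    exact measure_mono inter_subset_right

lemma dRatio_mono {X Y : Set (EucSp N)} (h : X ⊆ Y) (z : EucSp N) (ρ : ℝ) :
    dRatio X z ρ ≤ dRatio Y z ρ :=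
  ENNReal.div_le_div_right (measure_mono (inter_subset_inter_left _ h)) _

lemma dRatio_union_le (X Y : Set (EucSp N)) (z : EucSp N) (ρ : ℝ) :
    dRatio (X ∪ Y) z ρ ≤ dRatio X z ρ + dRatio Y z ρ := by
  rw [dRatio, dRatio, dRatio, ← ENNReal.add_div]
  refine ENNReal.div_le_div_right ?_ _
  rw [union_inter_distrib_right]
  exact measure_union_le _ _

lemma hasDensity_zero_mono {X Y : Set (EucSp N)} {z : EucSp N} (h : X ⊆ Y)
    (hY : HasDensity Y z 0) : HasDensity X z 0 := by
  rw [hasDensity_iff_dRatio] at hY ⊢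
  rw [ENNReal.ofReal_zero] at hY ⊢
  exact tendsto_of_tendsto_of_tendsto_of_le_of_le tendsto_const_nhds hY
    (fun ρ => zero_le) (fun ρ => dRatio_mono h z ρ)

lemma hasDensity_zero_union {X Y : Set (EucSp N)} {z : EucSp N}
    (hX : HasDensity X z 0) (hY : HasDensity Y z 0) : HasDensity (X ∪ Y) z 0 := by
  rw [hasDensity_iff_dRatio, ENNReal.ofReal_zero] at hX hY ⊢
  have hsum : Tendsto (fun ρ => dRatio X z ρ + dRatio Y z ρ) (𝓝[>] (0:ℝ)) (𝓝 0) := by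
    simpa using Tendsto.add hX hY
  exact tendsto_of_tendsto_of_tendsto_of_le_of_le tendsto_const_nhds hsum
    (fun ρ => zero_le) (fun ρ => dRatio_union_le X Y z ρ)

lemma dRatio_add_compl {X : Set (EucSp N)} (hX : MeasurableSet X) {z : EucSp N} {ρ : ℝ}
    (hρ : 0 < ρ) : dRatio X z ρ + dRatio Xᶜ z ρ = 1 := by
  have hb0 : volume (ball z ρ) ≠ 0 := (measure_ball_pos volume z hρ).ne'
  have hbt : volume (ball z ρ) ≠ ⊤ := measure_ball_lt_top.ne
  have hcompl : Xᶜ ∩ ball z ρ = ball z ρ \ X := by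
    ext y; simp [and_comm, Set.mem_diff]
  rw [dRatio, dRatio, hcompl, ← ENNReal.add_div, inter_comm,
    measure_inter_add_diff (ball z ρ) hX, ENNReal.div_self hb0 hbt]

lemma hasDensity_compl_iff {X : Set (EucSp N)} (hX : MeasurableSet X) {z : EucSp N} :
    HasDensity Xᶜ z 0 ↔ HasDensity X z 1 := by
  have hev : ∀ᶠ ρ in 𝓝[>] (0:ℝ), dRatio X z ρ + dRatio Xᶜ z ρ = 1 := by
    filter_upwards [self_mem_nhdsWithin] with ρ hρ
    exact dRatio_add_compl hX hρ
  constructor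
  · intro h
    rw [hasDensity_iff_dRatio, ENNReal.ofReal_zero, ENNReal.tendsto_nhds_zero] at h
    rw [hasDensity_iff_dRatio, ENNReal.ofReal_one, ENNReal.tendsto_nhds ENNReal.one_ne_top]
    intro ε hε
    filter_upwards [h ε hε, hev] with ρ hρ hρ'
    constructor
    · have : (1:ℝ≥0∞) ≤ dRatio X z ρ + ε := by
        rw [← hρ']
        gcongr
      exact tsub_le_iff_right.mpr this
    · exact le_trans (dRatio_le_one ρ) le_self_add
  · intro h
    rw [hasDensity_iff_dRatio, ENNReal.ofReal_one, ENNReal.tendsto_nhds ENNReal.one_ne_top] at h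
    rw [hasDensity_iff_dRatio, ENNReal.ofReal_zero, ENNReal.tendsto_nhds_zero]
    intro ε hε
    filter_upwards [h ε hε, hev] with ρ hρ hρ'
    by_cases hε1 : (1:ℝ≥0∞) ≤ ε
    · exact le_trans (dRatio_le_one ρ) hε1
    · push_neg at hε1
      have h1 : dRatio Xᶜ z ρ + (1 - ε) ≤ 1 := by
        calc dRatio Xᶜ z ρ + (1 - ε) ≤ dRatio Xᶜ z ρ + dRatio X z ρ := by
              gcongr
              exact hρ.1
          _ = 1 := by rw [add_comm]; exact hρ'
      have := ENNReal.le_sub_of_add_le_right (ne_top_of_le_ne_top ENNReal.one_ne_top tsub_le_self) h1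
      calc dRatio Xᶜ z ρ ≤ 1 - (1 - ε) := this
        _ ≤ ε := by
            rw [ENNReal.sub_sub_cancel ENNReal.one_ne_top hε1.le]

end Aux
section Aux2
variable {N : ℕ}

lemma hasDensity_congr_near {X Y Kc : Set (EucSp N)} (hKc : IsClosed Kc) {z : EucSp N}
    (hz : z ∉ Kc) (h : volume ((X ∆ Y) \ Kc) = 0) {α : ℝ} :
    HasDensity X z α ↔ HasDensity Y z α := by
  obtain ⟨ε, hε, hball⟩ : ∃ ε > 0, ball z ε ⊆ Kcᶜ :=
    Metric.mem_nhds_iff.mp (hKc.isOpen_compl.mem_nhds hz)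
  have hev : (fun ρ : ℝ => volume (X ∩ ball z ρ) / volume (ball z ρ))
      =ᶠ[𝓝[>] (0:ℝ)] (fun ρ : ℝ => volume (Y ∩ ball z ρ) / volume (ball z ρ)) := by
    filter_upwards [Ioo_mem_nhdsGT_of_mem (by exact ⟨le_refl 0, hε⟩ : (0:ℝ) ∈ Ico 0 ε)]
      with ρ hρ
    have hsub : (X ∩ ball z ρ) ∆ (Y ∩ ball z ρ) ⊆ (X ∆ Y) \ Kc := by
      intro y hy
      have hyb : y ∈ ball z ρ := by
        rcases hy with hy | hy
        · exact hy.1.2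
        · exact hy.1.2
      have hyK : y ∉ Kc := hball (ball_subset_ball hρ.2.le hyb)
      rcases hy with hy | hy
      · exact ⟨Or.inl ⟨hy.1.1, fun hYy => hy.2 ⟨hYy, hyb⟩⟩, hyK⟩
      · exact ⟨Or.inr ⟨hy.1.1, fun hXy => hy.2 ⟨hXy, hyb⟩⟩, hyK⟩
    have : volume ((X ∩ ball z ρ) ∆ (Y ∩ ball z ρ)) = 0 :=
      le_antisymm (le_trans (measure_mono hsub) h.le) zero_le
    rw [vol_eq_of_symmDiff_null this]
  exact ⟨fun hX => Tendsto.congr' hev hX, fun hY => Tendsto.congr' hev.symm hY⟩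

lemma essBdry_mem_iff {X : Set (EucSp N)} {z : EucSp N} :
    z ∈ essBdry X ↔ ¬ HasDensity X z 0 ∧ ¬ HasDensity X z 1 := Iff.rfl

lemma essBdry_congr_near {X Y Kc : Set (EucSp N)} (hKc : IsClosed Kc)
    (h : volume ((X ∆ Y) \ Kc) = 0) {z : EucSp N} (hz : z ∉ Kc) :
    (z ∈ essBdry X ↔ z ∈ essBdry Y) := by
  rw [essBdry_mem_iff, essBdry_mem_iff,
    hasDensity_congr_near hKc hz h (α := 0), hasDensity_congr_near hKc hz h (α := 1)]

lemma essBdry_congr_ae {X Y : Set (EucSp N)} (h : volume (X ∆ Y) = 0) :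
    essBdry X = essBdry Y := by
  ext z
  refine essBdry_congr_near isClosed_empty ?_ (notMem_empty z)
  simpa using h

lemma essBdry_diff_eq_of_subset {X Y Kc B : Set (EucSp N)} (hKc : IsClosed Kc)
    (h : volume ((X ∆ Y) \ Kc) = 0) (hsub : Kc ⊆ B) :
    essBdry X \ B = essBdry Y \ B := by
  ext z
  simp only [Set.mem_diff]
  constructor
  · rintro ⟨hz, hzB⟩
    exact ⟨(essBdry_congr_near hKc h (fun hK => hzB (hsub hK))).mp hz, hzB⟩
  · rintro ⟨hz, hzB⟩
    exact ⟨(essBdry_congr_near hKc h (fun hK => hzB (hsub hK))).mpr hz, hzB⟩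

-- pointwise density facts for measurable sets
lemma hasDensity_one_diff {A W : Set (EucSp N)} {z : EucSp N} (hA : MeasurableSet A)
    (hW : MeasurableSet W) (h1 : HasDensity A z 1) (h0 : HasDensity W z 0) :
    HasDensity (A \ W) z 1 := by
  have hcA : HasDensity Aᶜ z 0 := (hasDensity_compl_iff hA).mpr h1
  have hcup : HasDensity (Aᶜ ∪ W) z 0 := hasDensity_zero_union hcA h0
  have : (A \ W)ᶜ = Aᶜ ∪ W := by
    ext y; by_cases hy : y ∈ A <;> by_cases hw : y ∈ W <;> simp [hy, hw, Set.mem_diff]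
  rw [← hasDensity_compl_iff (hA.diff hW), this]
  exact hcup

lemma hasDensity_zero_diff_of_one {A W : Set (EucSp N)} {z : EucSp N} (hA : MeasurableSet A)
    (h1 : HasDensity A z 1) : HasDensity (W \ A) z 0 := by
  have hcA : HasDensity Aᶜ z 0 := (hasDensity_compl_iff hA).mpr h1
  exact hasDensity_zero_mono (fun y hy => hy.2) hcA

/-- CUT pointwise: `∂ᵉ(A\W) ⊆ ∂ᵉA ∪ (∂ᵉW \ ∂ᵉ(W\A))`. -/
lemma essBdry_diff_subset {A W : Set (EucSp N)} (hA : MeasurableSet A)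
    (hW : MeasurableSet W) :
    essBdry (A \ W) ⊆ essBdry A ∪ (essBdry W \ essBdry (W \ A)) := by
  intro z hz
  by_cases hzA : z ∈ essBdry A
  · exact Or.inl hzA
  -- z has density 0 or 1 for A
  rw [essBdry_mem_iff, not_and_or, not_not, not_not] at hzA
  rcases hzA with hA0 | hA1
  · exact absurd (hasDensity_zero_mono diff_subset hA0) hz.1
  · -- density of A is 1
    have hWA0 : HasDensity (W \ A) z 0 := hasDensity_zero_diff_of_one hA hA1
    refine Or.inr ⟨?_, ?_⟩
    · -- z ∈ essBdry W
      rw [essBdry_mem_iff]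
      constructor
      · intro hW0
        exact hz.2 (hasDensity_one_diff hA hW hA1 hW0)
      · intro hW1
        have hcW : HasDensity Wᶜ z 0 := (hasDensity_compl_iff hW).mpr hW1
        exact hz.1 (hasDensity_zero_mono (fun y hy => hy.2) hcW)
    · rw [essBdry_mem_iff]
      intro hcon
      exact hcon.1 hWA0

lemma essBdry_diff_inter_subset {A W : Set (EucSp N)} (hA : MeasurableSet A)
    (hW : MeasurableSet W) :
    essBdry (A \ W) ∩ essBdry (W \ A) ⊆ essBdry A ∩ essBdry W := by
  intro z hz
  constructor
  · by_contra hzA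
    rw [essBdry_mem_iff, not_and_or, not_not, not_not] at hzA
    rcases hzA with hA0 | hA1
    · exact hz.1.1 (hasDensity_zero_mono diff_subset hA0)
    · exact hz.2.1 (hasDensity_zero_diff_of_one hA hA1)
  · by_contra hzW
    rw [essBdry_mem_iff, not_and_or, not_not, not_not] at hzW
    rcases hzW with hW0 | hW1
    · exact hz.2.1 (hasDensity_zero_mono diff_subset hW0)
    · exact hz.1.1 (hasDensity_zero_diff_of_one hW hW1)

end Aux2
section Aux3
variable {N : ℕ}

lemma volume_ball_eq (hN : N ≠ 0) (w : EucSp N) {s : ℝ} (hs : 0 ≤ s) :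
    volume (ball w s) = ENNReal.ofReal (s ^ N) * volume (ball (0 : EucSp N) 1) := by
  obtain ⟨n, rfl⟩ : ∃ n, N = n + 1 := ⟨N - 1, (Nat.succ_pred_eq_of_pos (Nat.pos_of_ne_zero hN)).symm⟩
  haveI : Nontrivial (EucSp (n+1)) := by
    refine ⟨0, EuclideanSpace.single 0 1, fun h => ?_⟩
    have := congrFun (congrArg (fun v : EucSp (n+1) => (v : Fin (n+1) → ℝ)) h) 0
    simp [EuclideanSpace.single] at this
  rw [Measure.addHaar_ball volume w hs, finrank_euclideanSpace_fin]

lemma continuous_volume_inter_ball (hN : N ≠ 0) (X : Set (EucSp N)) {ρ : ℝ} (hρ : 0 < ρ) :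
    Continuous fun z : EucSp N => volume (X ∩ ball z ρ) := by
  set c0 := volume (ball (0 : EucSp N) 1) with hc0
  have hc0t : c0 ≠ ⊤ := measure_ball_lt_top.ne
  set g := fun z : EucSp N => volume (X ∩ ball z ρ) with hg
  rw [continuous_iff_continuousAt]
  intro w
  have hgfin : g w ≠ ⊤ := (lt_of_le_of_lt (measure_mono inter_subset_right) measure_ball_lt_top).ne
  rw [ContinuousAt, ENNReal.tendsto_nhds hgfin]
  intro ε hε
  -- the annulus volume
  set η : ℝ → ℝ≥0∞ := fun t =>
    ENNReal.ofReal ((ρ + t) ^ N) * c0 - ENNReal.ofReal (ρ ^ N) * c0 with hη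
  have hballs : ∀ u : EucSp N, ∀ t : ℝ, 0 ≤ t →
      volume (ball u (ρ + t) \ ball u ρ) = η t := by
    intro u t ht
    rw [measure_diff (ball_subset_ball (by linarith)) measurableSet_ball.nullMeasurableSet
        measure_ball_lt_top.ne, volume_ball_eq hN u (by linarith), volume_ball_eq hN u hρ.le]
  have hkey : ∀ z : EucSp N, g z ≤ g w + η (dist z w) ∧ g w ≤ g z + η (dist z w) := by
    intro z
    have hd : (0:ℝ) ≤ dist z w := dist_nonneg
    constructor
    · calc g z ≤ volume ((X ∩ ball w ρ) ∪ (ball z ρ \ ball w ρ)) := by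
            apply measure_mono; rintro y ⟨hyX, hyb⟩
            by_cases hyw : y ∈ ball w ρ
            · exact Or.inl ⟨hyX, hyw⟩
            · exact Or.inr ⟨hyb, hyw⟩
        _ ≤ g w + volume (ball z ρ \ ball w ρ) := measure_union_le _ _
        _ ≤ g w + η (dist z w) := by
            gcongr
            calc volume (ball z ρ \ ball w ρ) ≤ volume (ball w (ρ + dist z w) \ ball w ρ) := by
                  apply measure_mono
                  rintro y ⟨hy, hy'⟩
                  refine ⟨?_, hy'⟩
                  rw [mem_ball] at hy ⊢
                  calc dist y w ≤ dist y z + dist z w := dist_triangle _ _ _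
                    _ < ρ + dist z w := by linarith
              _ = η (dist z w) := hballs w _ hd
    · calc g w ≤ volume ((X ∩ ball z ρ) ∪ (ball w ρ \ ball z ρ)) := by
            apply measure_mono; rintro y ⟨hyX, hyb⟩
            by_cases hyz : y ∈ ball z ρ
            · exact Or.inl ⟨hyX, hyz⟩
            · exact Or.inr ⟨hyb, hyz⟩
        _ ≤ g z + volume (ball w ρ \ ball z ρ) := measure_union_le _ _
        _ ≤ g z + η (dist z w) := by
            gcongr
            calc volume (ball w ρ \ ball z ρ) ≤ volume (ball z (ρ + dist z w) \ ball z ρ) := by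
                  apply measure_mono
                  rintro y ⟨hy, hy'⟩
                  refine ⟨?_, hy'⟩
                  rw [mem_ball] at hy ⊢
                  calc dist y z ≤ dist y w + dist w z := dist_triangle _ _ _
                    _ < ρ + dist z w := by rw [dist_comm w z]; linarith
              _ = η (dist z w) := hballs z _ hd
  -- η (dist z w) → 0 as z → w
  have hηcont : Tendsto (fun z : EucSp N => η (dist z w)) (𝓝 w) (𝓝 0) := by
    have h1 : Tendsto (fun z : EucSp N => ENNReal.ofReal ((ρ + dist z w) ^ N) * c0) (𝓝 w)
        (𝓝 (ENNReal.ofReal (ρ ^ N) * c0)) := by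
      have hcont : Continuous fun z : EucSp N => ENNReal.ofReal ((ρ + dist z w) ^ N) :=
        ENNReal.continuous_ofReal.comp (((continuous_const.add (continuous_id.dist continuous_const))).pow N)
      have := ENNReal.Tendsto.mul_const (hcont.tendsto w) (Or.inr hc0t)
      simpa using this
    have h2 : Tendsto (fun _ : EucSp N => ENNReal.ofReal (ρ ^ N) * c0) (𝓝 w)
        (𝓝 (ENNReal.ofReal (ρ ^ N) * c0)) := tendsto_const_nhds
    have := ENNReal.Tendsto.sub h1 h2 (Or.inl (ENNReal.mul_ne_top ENNReal.ofReal_ne_top hc0t))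
    simpa [hη] using this
  rw [ENNReal.tendsto_nhds_zero] at hηcont
  filter_upwards [hηcont ε hε] with z hz
  obtain ⟨hz1, hz2⟩ := hkey z
  constructor
  · rw [tsub_le_iff_right]
    exact hz2.trans (by gcongr)
  · exact hz1.trans (by gcongr)
end Aux3
section Aux4
variable {N : ℕ}

lemma hasDensity_iff_countable (hN : N ≠ 0) (X : Set (EucSp N)) (α : ℝ) (z : EucSp N) :
    HasDensity X z α ↔ ∀ k : ℕ, ∃ q : ℚ, 0 < q ∧ ∀ ρ : ℝ, ρ ∈ Ioo (0:ℝ) (q:ℝ) →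
      dRatio X z ρ ∈ Icc (ENNReal.ofReal α - ((k:ℝ≥0∞)+1)⁻¹)
        (ENNReal.ofReal α + ((k:ℝ≥0∞)+1)⁻¹) := by
  rw [hasDensity_iff_dRatio, ENNReal.tendsto_nhds ENNReal.ofReal_ne_top]
  constructor
  · intro h k
    have hek : (0:ℝ≥0∞) < ((k:ℝ≥0∞)+1)⁻¹ := ENNReal.inv_pos.mpr (by simp)
    have := h _ hek
    rw [(nhdsGT_basis (0:ℝ)).eventually_iff] at this
    obtain ⟨δ, hδ, hmem⟩ := this
    obtain ⟨q, hq0, hqδ⟩ := exists_rat_btwn hδ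
    exact ⟨q, by exact_mod_cast hq0, fun ρ hρ => hmem ⟨hρ.1, hρ.2.trans hqδ⟩⟩
  · intro h ε hε
    obtain ⟨n, hn⟩ := ENNReal.exists_inv_nat_lt hε.ne'
    have hle : ((n:ℝ≥0∞)+1)⁻¹ ≤ ε := by
      refine le_trans ?_ hn.le
      exact ENNReal.inv_le_inv.mpr (by simp)
    obtain ⟨q, hq0, hmem⟩ := h n
    have hq0' : (0:ℝ) < (q:ℝ) := by exact_mod_cast hq0
    rw [(nhdsGT_basis (0:ℝ)).eventually_iff]
    refine ⟨q, hq0', fun ρ hρ => ?_⟩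
    obtain ⟨h1, h2⟩ := hmem ρ hρ
    constructor
    · exact le_trans (tsub_le_tsub_left hle _) h1
    · exact h2.trans (by gcongr)

lemma measurableSet_hasDensity (X : Set (EucSp N)) (α : ℝ) :
    MeasurableSet {z | HasDensity X z α} := by
  by_cases hN : N = 0
  · subst hN
    haveI : Subsingleton (EucSp 0) := ⟨fun a b => by ext i; exact i.elim0⟩
    exact (Set.subsingleton_of_subsingleton).measurableSet
  · have hset : {z | HasDensity X z α} = ⋂ k : ℕ, ⋃ q ∈ {q : ℚ | 0 < q},
        ⋂ ρ ∈ Ioo (0:ℝ) (q:ℝ), {z | dRatio X z ρ ∈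
          Icc (ENNReal.ofReal α - ((k:ℝ≥0∞)+1)⁻¹) (ENNReal.ofReal α + ((k:ℝ≥0∞)+1)⁻¹)} := by
      ext z
      simp only [Set.mem_setOf_eq, Set.mem_iInter, Set.mem_iUnion, hasDensity_iff_countable hN]
      constructor
      · intro h k; obtain ⟨q, hq, hh⟩ := h k; exact ⟨q, hq, fun ρ hρ => hh ρ hρ⟩
      · intro h k; obtain ⟨q, hq, hh⟩ := h k; exact ⟨q, hq, fun ρ hρ => hh ρ hρ⟩
    rw [hset]
    refine MeasurableSet.iInter fun k => ?_
    refine MeasurableSet.biUnion (Set.to_countable _) fun q hq => ?_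
    have : IsClosed (⋂ ρ ∈ Ioo (0:ℝ) (q:ℝ), {z : EucSp N | dRatio X z ρ ∈
        Icc (ENNReal.ofReal α - ((k:ℝ≥0∞)+1)⁻¹) (ENNReal.ofReal α + ((k:ℝ≥0∞)+1)⁻¹)}) := by
      refine isClosed_biInter fun ρ hρ => ?_
      have hρ0 : (0:ℝ) < ρ := hρ.1
      have hvb0 : volume (ball (0:EucSp N) ρ) ≠ 0 := (measure_ball_pos volume _ hρ0).ne'
      have hvbt : volume (ball (0:EucSp N) ρ) ≠ ⊤ := measure_ball_lt_top.ne
      have hvol : ∀ z : EucSp N, volume (ball z ρ) = volume (ball (0:EucSp N) ρ) := by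
        intro z
        rw [volume_ball_eq hN z hρ0.le, volume_ball_eq hN 0 hρ0.le]
      have hrw : {z : EucSp N | dRatio X z ρ ∈
          Icc (ENNReal.ofReal α - ((k:ℝ≥0∞)+1)⁻¹) (ENNReal.ofReal α + ((k:ℝ≥0∞)+1)⁻¹)} =
          (fun z => volume (X ∩ ball z ρ)) ⁻¹'
            (Icc ((ENNReal.ofReal α - ((k:ℝ≥0∞)+1)⁻¹) * volume (ball (0:EucSp N) ρ))
              ((ENNReal.ofReal α + ((k:ℝ≥0∞)+1)⁻¹) * volume (ball (0:EucSp N) ρ))) := by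
        ext z
        simp only [Set.mem_setOf_eq, Set.mem_preimage, Set.mem_Icc, dRatio, hvol z]
        constructor
        · rintro ⟨h1, h2⟩
          constructor
          · exact (ENNReal.le_div_iff_mul_le (Or.inl hvb0) (Or.inl hvbt)).mp h1
          · exact (ENNReal.div_le_iff_le_mul (Or.inl hvb0) (Or.inl hvbt)).mp h2
        · rintro ⟨h1, h2⟩
          constructor
          · exact (ENNReal.le_div_iff_mul_le (Or.inl hvb0) (Or.inl hvbt)).mpr h1
          · rw [ENNReal.div_le_iff_le_mul (Or.inl hvb0) (Or.inl hvbt)]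
            exact h2
      rw [hrw]
      exact IsClosed.preimage (continuous_volume_inter_ball hN X hρ0) isClosed_Icc
    exact this.measurableSet

lemma measurableSet_essBdry (X : Set (EucSp N)) : MeasurableSet (essBdry X) := by
  have : essBdry X = ({z | HasDensity X z 0} ∪ {z | HasDensity X z 1})ᶜ := by
    ext z
    simp only [essBdry_mem_iff, Set.mem_compl_iff, Set.mem_union, Set.mem_setOf_eq, not_or]
  rw [this]
  exact ((measurableSet_hasDensity X 0).union (measurableSet_hasDensity X 1)).compl
end Aux4
section Aux5
variable {N : ℕ}

lemma cheeger_le_ratio {G W : Set (EucSp N)} (hsub : G ⊆ W) (hm : MeasurableSet G)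
    (hpos : 0 < volume G) : cheeger W ≤ perim G / volume G := by
  unfold cheeger
  exact iInf_le_of_le G (iInf_le_of_le hsub (iInf_le_of_le hm (iInf_le _ hpos)))

lemma mul_vol_le_perim {G W : Set (EucSp N)} {h : ℝ≥0∞} (hch : cheeger W = h)
    (hsub : G ⊆ W) (hm : MeasurableSet G) (hfin : volume G ≠ ⊤) :
    h * volume G ≤ perim G := by
  rcases eq_or_ne (volume G) 0 with h0 | h0
  · simp [h0]
  · have hle : h ≤ perim G / volume G := hch ▸ cheeger_le_ratio hsub hm (zero_lt_iff.mpr h0)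
    exact (ENNReal.le_div_iff_mul_le (Or.inl h0) (Or.inl hfin)).mp hle

/-- The key cutting estimate. -/
lemma perim_cut {A W : Set (EucSp N)} (hA : MeasurableSet A) (hW : MeasurableSet W)
    {h : ℝ≥0∞} (hht : h * volume (W \ A) ≠ ⊤)
    (hperimW : perim W = h * volume W)
    (hlow : h * volume (W \ A) ≤ perim (W \ A)) :
    perim (A \ W) ≤ perim A + h * volume (A ∩ W) := by
  have hperim : ∀ S : Set (EucSp N), perim S = (μH[(N:ℝ)-1] : Measure (EucSp N)) (essBdry S) :=
    fun _ => rfl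
  simp only [hperim] at hperimW hlow ⊢
  set ν : Measure (EucSp N) := μH[(N:ℝ)-1] with hν
  set L1 := essBdry (A \ W) with hL1
  set L2 := essBdry (W \ A) with hL2
  set R1 := essBdry A with hR1
  set R2 := essBdry W with hR2
  have m2 : MeasurableSet L2 := measurableSet_essBdry _
  have mR2 : MeasurableSet R2 := measurableSet_essBdry _
  have hkey : ν L1 + ν L2 ≤ ν R1 + ν R2 := by
    calc ν L1 + ν L2 = (ν (L1 ∩ L2) + ν (L1 \ L2)) + ν L2 := by
          rw [measure_inter_add_diff L1 m2]
      _ = ν (L1 ∩ L2) + (ν (L1 \ L2) + ν L2) := by rw [add_assoc]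
      _ = ν (L1 ∩ L2) + ν ((L1 \ L2) ∪ L2) := by
          rw [measure_union (disjoint_sdiff_left) m2]
      _ ≤ ν (R1 ∩ R2) + ν (R1 ∪ R2) := by
          refine add_le_add (measure_mono (essBdry_diff_inter_subset hA hW))
            (measure_mono (union_subset ?_ ?_))
          · exact diff_subset.trans ((essBdry_diff_subset hA hW).trans
              (union_subset_union_right _ diff_subset))
          · exact (essBdry_diff_subset hW hA).trans
              (union_subset (subset_union_right) (diff_subset.trans subset_union_left))
      _ = ν (R1 ∪ R2) + ν (R1 ∩ R2) := by rw [add_comm]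
      _ = ν R1 + ν R2 := measure_union_add_inter R1 mR2
  have hWsplit : volume W = volume (W ∩ A) + volume (W \ A) :=
    (measure_inter_add_diff W hA).symm
  have hmain : ν L1 + h * volume (W \ A) ≤ (ν R1 + h * volume (A ∩ W)) + h * volume (W \ A) := by
    calc ν L1 + h * volume (W \ A) ≤ ν L1 + ν L2 := add_le_add_right hlow _
      _ ≤ ν R1 + ν R2 := hkey
      _ = ν R1 + h * volume W := by rw [hperimW]
      _ = ν R1 + (h * volume (W ∩ A) + h * volume (W \ A)) := by rw [hWsplit, mul_add]
      _ = (ν R1 + h * volume (A ∩ W)) + h * volume (W \ A) := by rw [inter_comm W A, add_assoc]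
  exact (ENNReal.add_le_add_iff_right hht).mp hmain

lemma perim_diff_finset_le {k : ℕ} (E : Fin k → Set (EucSp N)) (hj : Fin k → ℝ≥0∞)
    (hK : ℝ≥0∞)
    (hEm : ∀ j, MeasurableSet (E j))
    (hjle : ∀ j, hj j ≤ hK) (hKt : hK ≠ ⊤)
    (hEfin : ∀ j, volume (E j) ≠ ⊤)
    (hperimE : ∀ j, perim (E j) = hj j * volume (E j))
    (hlow : ∀ j (Z : Set (EucSp N)), MeasurableSet Z → Z ⊆ E j → hj j * volume Z ≤ perim Z)
    (F' : Set (EucSp N)) (hF' : MeasurableSet F') (s : Finset (Fin k)) :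
    perim (F' \ ⋃ j ∈ s, E j) ≤ perim F' + hK * volume (F' ∩ ⋃ j ∈ s, E j) := by
  induction s using Finset.induction_on with
  | empty => simp
  | @insert j0 s hj0s ih =>
    have hYm : MeasurableSet (⋃ j ∈ s, E j) := s.measurableSet_biUnion (fun j _ => hEm j)
    have hAm : MeasurableSet (F' \ ⋃ j ∈ s, E j) := hF'.diff hYm
    have hset : F' \ ⋃ j ∈ insert j0 s, E j = (F' \ ⋃ j ∈ s, E j) \ E j0 := by
      rw [Finset.set_biUnion_insert]
      ext z
      simp only [Set.mem_diff, Set.mem_union]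
      tauto
    have hjt : hj j0 ≠ ⊤ := fun hh => hKt (top_le_iff.mp (hh ▸ hjle j0))
    have hcut := perim_cut hAm (hEm j0)
      (hht := ENNReal.mul_ne_top hjt
        (fun hh => hEfin j0 (top_le_iff.mp (hh ▸ measure_mono diff_subset))))
      (hperimW := hperimE j0)
      (hlow := hlow j0 _ ((hEm j0).diff hAm) diff_subset)
    have hvol : volume (F' ∩ ⋃ j ∈ s, E j) + volume ((F' \ ⋃ j ∈ s, E j) ∩ E j0) =
        volume (F' ∩ ⋃ j ∈ insert j0 s, E j) := by
      rw [← measure_union ?hdisj (hAm.inter (hEm j0))]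
      · congr 1
        rw [Finset.set_biUnion_insert]
        ext z
        simp only [Set.mem_union, Set.mem_inter_iff, Set.mem_diff]
        tauto
      case hdisj =>
        rw [Set.disjoint_left]
        rintro z ⟨_, hzY⟩ ⟨⟨_, hzY'⟩, _⟩
        exact hzY' hzY
    calc perim (F' \ ⋃ j ∈ insert j0 s, E j)
        = perim ((F' \ ⋃ j ∈ s, E j) \ E j0) := by rw [hset]
      _ ≤ perim (F' \ ⋃ j ∈ s, E j) + hj j0 * volume ((F' \ ⋃ j ∈ s, E j) ∩ E j0) := hcut
      _ ≤ (perim F' + hK * volume (F' ∩ ⋃ j ∈ s, E j)) +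
            hK * volume ((F' \ ⋃ j ∈ s, E j) ∩ E j0) := by
          gcongr
          exact hjle j0
      _ = perim F' + hK * (volume (F' ∩ ⋃ j ∈ s, E j) +
            volume ((F' \ ⋃ j ∈ s, E j) ∩ E j0)) := by rw [mul_add, add_assoc]
      _ = perim F' + hK * volume (F' ∩ ⋃ j ∈ insert j0 s, E j) := by rw [hvol]

end Aux5
/-- Each set of a `1`-adjusted Cheeger `k`-tuple of a bounded open set `Ω`
is `(Λ, r₀)`-perimeter minimizing in `Ω` with `Λ = h_k(Ω)` and `r₀ = 1/h_k(Ω)`. -/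
theorem cheeger_set_perimeter_minimizing {N : ℕ} (Ω : Set (EucSp N))
    (hΩo : IsOpen Ω) (hΩb : Bornology.IsBounded Ω) (k : ℕ) (hk : 1 ≤ k)
    (E : Fin k → Set (EucSp N)) (hE : IsAdjusted 1 Ω k E) (i : Fin k)
    (x : EucSp N) (r : ℝ) (hr : 0 < r) (hr' : ENNReal.ofReal r < (cheegerK k Ω)⁻¹)
    (hball : closure (ball x r) ⊆ Ω)
    (F : Set (EucSp N)) (hFm : MeasurableSet F) (hFp : perim F ≠ ⊤)
    (hcc : CompactlyContained (E i ∆ F) (ball x r)) :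
    relPerim (E i) (ball x r) ≤
      relPerim F (ball x r) + cheegerK k Ω * volume (E i ∆ F) := by
  obtain ⟨hTuple, hAdj⟩ :=
    (hE : IsCheegerTuple Ω E ∧ ∀ i, cheeger (Ω \ ⋃ j, ⋃ (_ : j ≠ i), E j) = cheeger (E i) ∧
      cheeger (E i) = perim (E i) / volume (E i))
  obtain ⟨⟨hEsub, hEm, hEpos, hEdisj⟩, hsup⟩ := hTuple
  obtain ⟨K, hKcomp, hKB, hKnull⟩ := hcc
  set hK := cheegerK k Ω with hKdef
  -- basic finiteness facts
  have hKt : hK ≠ ⊤ := by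
    intro hcon
    rw [hcon, ENNReal.inv_top] at hr'
    exact (not_lt_of_ge zero_le) hr'
  have hEfin : ∀ j, volume (E j) ≠ ⊤ :=
    fun j => (lt_of_le_of_lt (measure_mono (hEsub j)) hΩb.measure_lt_top).ne
  set hj : Fin k → ℝ≥0∞ := fun j => perim (E j) / volume (E j) with hjdef
  have hjle : ∀ j, hj j ≤ hK := by
    intro j
    rw [← hsup]
    exact le_iSup (fun l => perim (E l) / volume (E l)) j
  have hperimE : ∀ j, perim (E j) = hj j * volume (E j) :=
    fun j => (ENNReal.div_mul_cancel (hEpos j).ne' (hEfin j)).symm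
  have hlow : ∀ j (Z : Set (EucSp N)), MeasurableSet Z → Z ⊆ E j →
      hj j * volume Z ≤ perim Z := by
    intro j Z hZm hZsub
    exact mul_vol_le_perim (hAdj j).2 hZsub hZm
      (fun hc => hEfin j (top_le_iff.mp (hc ▸ measure_mono hZsub)))
  have hBΩ : ball x r ⊆ Ω := subset_closure.trans hball
  have hKΩ : K ⊆ Ω := hKB.trans hBΩ
  -- the adjusted competitor
  set F' := F ∩ (E i ∪ K) with hF'def
  have hF'm : MeasurableSet F' := hFm.inter ((hEm i).union hKcomp.measurableSet)
  have hF'F : volume (F ∆ F') = 0 := by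
    refine le_antisymm (le_trans (measure_mono ?_) hKnull.le) zero_le
    rintro z (⟨hzF, hzF'⟩ | ⟨hzF', hzF⟩)
    · refine ⟨Or.inr ⟨hzF, fun hzE => hzF' ⟨hzF, Or.inl hzE⟩⟩,
        fun hzK => hzF' ⟨hzF, Or.inr hzK⟩⟩
    · exact absurd hzF'.1 hzF
  have hperimF' : perim F' = perim F := by
    unfold perim
    rw [essBdry_congr_ae (by rwa [symmDiff_comm])]
  set Y := ⋃ j, ⋃ (_ : j ≠ i), E j with hYdef
  have hYm : MeasurableSet Y :=
    MeasurableSet.iUnion fun j => MeasurableSet.iUnion fun _ => hEm j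
  have hYeq : (⋃ j ∈ Finset.univ.erase i, E j) = Y := by
    ext z
    simp only [hYdef, Set.mem_iUnion, Finset.mem_erase, Finset.mem_univ, and_true]
    try tauto
  have hEY : Disjoint (E i) Y := by
    rw [Set.disjoint_left]
    intro z hz hzY
    rw [hYdef, Set.mem_iUnion] at hzY
    obtain ⟨j, hj'⟩ := hzY
    rw [Set.mem_iUnion] at hj'
    obtain ⟨hji, hzj⟩ := hj'
    exact Set.disjoint_left.mp (hEdisj i j (Ne.symm hji)) hz hzj
  set Ft := F' \ Y with hFtdef
  have hFtm : MeasurableSet Ft := hF'm.diff hYm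
  -- induction bound : cutting along the other sets
  have hcut : perim Ft ≤ perim F' + hK * volume (F' ∩ Y) := by
    have := perim_diff_finset_le E hj hK hEm hjle hKt hEfin hperimE hlow F' hF'm
      (Finset.univ.erase i)
    rwa [hYeq] at this
  -- the lower bound from the Cheeger property of Ω \ Y
  have hFtΩ : Ft ⊆ Ω \ Y := by
    rintro z ⟨hzF', hzY⟩
    refine ⟨?_, hzY⟩
    rcases hzF'.2 with hz | hz
    · exact hEsub i hz
    · exact hKΩ hz
  have hlowFt : hj i * volume Ft ≤ perim Ft := by
    have hchΩi : cheeger (Ω \ Y) = hj i := by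
      rw [(hAdj i).1, (hAdj i).2]
    exact mul_vol_le_perim hchΩi hFtΩ hFtm
      (fun hc => hΩb.measure_lt_top.ne
        (top_le_iff.mp (hc ▸ measure_mono (hFtΩ.trans diff_subset))))
  -- volume bookkeeping
  have hEvol : volume (E i) ≤ volume Ft + volume (E i ∆ Ft) := by
    refine le_trans (measure_mono ?_) (measure_union_le _ _)
    intro z hz
    by_cases hzt : z ∈ Ft
    · exact Or.inl hzt
    · exact Or.inr (Or.inl ⟨hz, hzt⟩)
  have hvol2 : volume (F' ∩ Y) + volume (E i ∆ Ft) ≤ volume (E i ∆ F) := by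
    have hdisj : Disjoint (F' ∩ Y) (E i ∆ Ft) := by
      rw [Set.disjoint_left]
      rintro z ⟨hzF', hzY⟩ (⟨hzE, _⟩ | ⟨hzFt, _⟩)
      · exact Set.disjoint_left.mp hEY hzE hzY
      · exact hzFt.2 hzY
    have hmeas : MeasurableSet (E i ∆ Ft) := ((hEm i).diff hFtm).union (hFtm.diff (hEm i))
    rw [← measure_union hdisj hmeas]
    refine measure_mono ?_
    rintro z (⟨hzF', hzY⟩ | (⟨hzE, hzFt⟩ | ⟨hzFt, hzE⟩))
    · exact Or.inr ⟨hzF'.1, fun hzE => Set.disjoint_left.mp hEY hzE hzY⟩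
    · -- z ∈ E i \ Ft  →  z ∈ E i \ F
      refine Or.inl ⟨hzE, fun hzF => ?_⟩
      have hzF' : z ∈ F' := ⟨hzF, Or.inl hzE⟩
      have hzY : z ∉ Y := fun hzY => Set.disjoint_left.mp hEY hzE hzY
      exact hzFt ⟨hzF', hzY⟩
    · exact Or.inr ⟨hzFt.1.1, hzE⟩
  -- global estimate
  have hglobal : perim (E i) ≤ perim F + hK * volume (E i ∆ F) := by
    calc perim (E i) = hj i * volume (E i) := hperimE i
      _ ≤ hj i * (volume Ft + volume (E i ∆ Ft)) := mul_le_mul_right hEvol _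
      _ = hj i * volume Ft + hj i * volume (E i ∆ Ft) := mul_add _ _ _
      _ ≤ perim Ft + hK * volume (E i ∆ Ft) :=
          add_le_add hlowFt (mul_le_mul_left (hjle i) _)
      _ ≤ (perim F' + hK * volume (F' ∩ Y)) + hK * volume (E i ∆ Ft) :=
          add_le_add_left hcut _
      _ = perim F' + hK * (volume (F' ∩ Y) + volume (E i ∆ Ft)) := by
          rw [mul_add, add_assoc]
      _ ≤ perim F + hK * volume (E i ∆ F) := by
          rw [hperimF']
          exact add_le_add_right (mul_le_mul_right hvol2 _) _
  -- localization
  have hXeq : essBdry (E i) \ ball x r = essBdry F \ ball x r :=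
    essBdry_diff_eq_of_subset hKcomp.isClosed hKnull hKB
  have hsplitE : relPerim (E i) (ball x r) +
      (μH[(N:ℝ)-1] : Measure (EucSp N)) (essBdry (E i) \ ball x r) = perim (E i) :=
    measure_inter_add_diff _ measurableSet_ball
  have hsplitF : relPerim F (ball x r) +
      (μH[(N:ℝ)-1] : Measure (EucSp N)) (essBdry F \ ball x r) = perim F :=
    measure_inter_add_diff _ measurableSet_ball
  have hXfin : (μH[(N:ℝ)-1] : Measure (EucSp N)) (essBdry F \ ball x r) ≠ ⊤ :=
    fun hc => hFp (top_le_iff.mp (hc ▸ measure_mono diff_subset))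
  have hfinal : relPerim (E i) (ball x r) +
      (μH[(N:ℝ)-1] : Measure (EucSp N)) (essBdry F \ ball x r) ≤
      (relPerim F (ball x r) + hK * volume (E i ∆ F)) +
      (μH[(N:ℝ)-1] : Measure (EucSp N)) (essBdry F \ ball x r) := by
    calc relPerim (E i) (ball x r) +
        (μH[(N:ℝ)-1] : Measure (EucSp N)) (essBdry F \ ball x r)
        = relPerim (E i) (ball x r) +
          (μH[(N:ℝ)-1] : Measure (EucSp N)) (essBdry (E i) \ ball x r) := by rw [hXeq]
      _ = perim (E i) := hsplitE
      _ ≤ perim F + hK * volume (E i ∆ F) := hglobal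
      _ = (relPerim F (ball x r) +
            (μH[(N:ℝ)-1] : Measure (EucSp N)) (essBdry F \ ball x r)) +
            hK * volume (E i ∆ F) := by rw [hsplitF]
      _ = (relPerim F (ball x r) + hK * volume (E i ∆ F)) +
            (μH[(N:ℝ)-1] : Measure (EucSp N)) (essBdry F \ ball x r) := by ring
  exact (ENNReal.add_le_add_iff_right hXfin).mp hfinal

end
end

section
/- Let 0 < R < 1 and let Ω := {x ∈ ℝ² : R < |x| < 1} be the open annulus. Then h_2(Ω) ≤ 2(π(1+R) + 2(1−R)) / (π(1−R²)), and this quantity is strictly smaller than 4/(1−R); in particular h_2(Ω) < 4/(1−R). -/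
open MeasureTheory Metric Set Filter Topology
open scoped ENNReal symmDiff

noncomputable section

/-- The open annulus `{R < |x| < 1}` in `ℝ²`. -/
def ann (R : ℝ) : Set (EucSp 2) := {x | R < ‖x‖ ∧ ‖x‖ < 1}

/-- The open upper half-annulus `Ω' = {R < |x| < 1, x₂ > 0}` in `ℝ²`. -/
def halfAnn (R : ℝ) : Set (EucSp 2) := {x | R < ‖x‖ ∧ ‖x‖ < 1 ∧ 0 < x 1}

/-- The inner parallel set `[Ω']^r` of the upper half-annulus at distance `r`. -/
def innerPar (R r : ℝ) : Set (EucSp 2) :=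
  {x ∈ halfAnn R | r ≤ Metric.infDist x (frontier (halfAnn R))}

/-- The set `𝒪_r` obtained by rolling a disc of radius `r` inside the upper half-annulus,
with the convention `𝒪_0 = Ω'`. -/
def Oset (R r : ℝ) : Set (EucSp 2) :=
  if r = 0 then halfAnn R else ⋃ x ∈ innerPar R r, ball x r

/-! ### Auxiliary material for the proof -/

section Aux

/-- Points in the interior have density one. -/
lemma hasDensity_one_of_mem_interior {N : ℕ} {E : Set (EucSp N)} {x : EucSp N}
    (hx : x ∈ interior E) : HasDensity E x 1 := by
  rw [mem_interior_iff_mem_nhds, Metric.mem_nhds_iff] at hx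
  obtain ⟨ε, hε, hsub⟩ := hx
  have h10 : ENNReal.ofReal (1:ℝ) = 1 := by simp
  rw [HasDensity, h10]
  apply Tendsto.congr' _ tendsto_const_nhds
  filter_upwards [Ioo_mem_nhdsGT_of_mem (by exact ⟨le_refl _, hε⟩ : (0:ℝ) ∈ Ico 0 ε)] with r hr
  have h1 : ball x r ⊆ E := (ball_subset_ball hr.2.le).trans hsub
  rw [inter_eq_self_of_subset_right h1]
  exact (ENNReal.div_self (measure_ball_pos volume x hr.1).ne' measure_ball_lt_top.ne).symm

/-- Points in the interior of the complement have density zero. -/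
lemma hasDensity_zero_of_mem_interior_compl {N : ℕ} {E : Set (EucSp N)} {x : EucSp N}
    (hx : x ∈ interior Eᶜ) : HasDensity E x 0 := by
  rw [mem_interior_iff_mem_nhds, Metric.mem_nhds_iff] at hx
  obtain ⟨ε, hε, hsub⟩ := hx
  have h00 : ENNReal.ofReal (0:ℝ) = 0 := by simp
  rw [HasDensity, h00]
  apply Tendsto.congr' _ tendsto_const_nhds
  filter_upwards [Ioo_mem_nhdsGT_of_mem (by exact ⟨le_refl _, hε⟩ : (0:ℝ) ∈ Ico 0 ε)] with r hr
  have h1 : E ∩ ball x r = ∅ := by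
    rw [eq_empty_iff_forall_notMem]
    intro y hy
    exact hsub ((ball_subset_ball hr.2.le) hy.2) hy.1
  rw [h1]
  simp

/-- The essential boundary is contained in the topological boundary. -/
lemma essBdry_subset_frontier {N : ℕ} (E : Set (EucSp N)) : essBdry E ⊆ frontier E := by
  intro x hx
  by_contra hxf
  by_cases hc : x ∈ closure E
  · have : x ∈ interior E := by
      by_contra hi
      exact hxf ⟨hc, hi⟩
    exact hx.2 (hasDensity_one_of_mem_interior this)
  · have : x ∈ interior Eᶜ := by rwa [interior_compl, mem_compl_iff]
    exact hx.1 (hasDensity_zero_of_mem_interior_compl this)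

/-- Shorthand for points of the plane. -/
def mk2 (p q : ℝ) : EucSp 2 := WithLp.toLp 2 ![p, q]

lemma norm_mk2 (p q : ℝ) : ‖mk2 p q‖ = Real.sqrt (p^2 + q^2) := by
  rw [EuclideanSpace.norm_eq]; simp [mk2, Fin.sum_univ_two, sq_abs]

lemma mk2_sub (p q p' q' : ℝ) : mk2 p q - mk2 p' q' = mk2 (p-p') (q-q') := by
  ext i; fin_cases i <;> rfl

lemma eq_mk2 (x : EucSp 2) : x = mk2 (x 0) (x 1) := by
  ext i; fin_cases i <;> rfl

lemma norm_coords (x : EucSp 2) : ‖x‖ = Real.sqrt ((x 0)^2 + (x 1)^2) := by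
  conv_lhs => rw [eq_mk2 x]
  exact norm_mk2 _ _

/-- Parametrization of an (upper or lower, according to `ε = ±1`) half circle of radius `a`. -/
def arcMap (a ε : ℝ) (t : ℝ) : EucSp 2 := mk2 (a * Real.cos t) (ε * (a * Real.sin t))

/-- Parametrization of the horizontal axis. -/
def segMap (t : ℝ) : EucSp 2 := mk2 t 0

lemma lipschitz_segMap : LipschitzWith 1 segMap := by
  apply LipschitzWith.of_dist_le_mul
  intro t s
  rw [dist_eq_norm, segMap, segMap, mk2_sub, norm_mk2]
  simp [Real.sqrt_sq_eq_abs, Real.dist_eq]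

lemma two_sub_two_cos_le (u : ℝ) : 2 - 2 * Real.cos u ≤ u ^ 2 := by
  nlinarith [Real.one_sub_sq_div_two_le_cos (x := u)]

lemma lipschitz_arcMap (a ε : ℝ) (ha : 0 ≤ a) (hε : ε = 1 ∨ ε = -1) :
    LipschitzWith a.toNNReal (arcMap a ε) := by
  apply LipschitzWith.of_dist_le_mul
  intro t s
  rw [dist_eq_norm, arcMap, arcMap, mk2_sub, norm_mk2]
  have hε2 : ε ^ 2 = 1 := by rcases hε with h | h <;> simp [h]
  have e1 : (ε * (a * Real.sin t) - ε * (a * Real.sin s)) ^ 2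
      = ε ^ 2 * (a * Real.sin t - a * Real.sin s) ^ 2 := by ring
  have key : (a * Real.cos t - a * Real.cos s) ^ 2
        + (ε * (a * Real.sin t) - ε * (a * Real.sin s)) ^ 2
      = a ^ 2 * (2 - 2 * Real.cos (t - s)) := by
    rw [e1, hε2, one_mul, Real.cos_sub]
    nlinarith [Real.sin_sq_add_cos_sq t, Real.sin_sq_add_cos_sq s]
  rw [key]
  have h1 : a ^ 2 * (2 - 2 * Real.cos (t - s)) ≤ (a * |t - s|) ^ 2 := by
    have := two_sub_two_cos_le (t - s)
    have h2 : (t-s)^2 = |t-s|^2 := (sq_abs _).symm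
    nlinarith [sq_nonneg a]
  calc Real.sqrt (a ^ 2 * (2 - 2 * Real.cos (t - s))) ≤ Real.sqrt ((a * |t-s|)^2) :=
        Real.sqrt_le_sqrt h1
    _ = a * |t - s| := Real.sqrt_sq (by positivity)
    _ ≤ a.toNNReal * dist t s := by
        rw [Real.dist_eq, Real.coe_toNNReal a ha]

lemma abs_coord_le (x : EucSp 2) (i : Fin 2) : |x i| ≤ ‖x‖ := by
  rw [EuclideanSpace.norm_eq, ← Real.sqrt_sq_eq_abs]
  apply Real.sqrt_le_sqrt
  have h := Finset.single_le_sum (f := fun j => ‖x j‖^2)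
    (fun j _ => by positivity) (Finset.mem_univ i)
  simpa [Real.norm_eq_abs, sq_abs] using h

lemma halfCircle_subset (a ε : ℝ) (ha : 0 < a) (hε : ε = 1 ∨ ε = -1) :
    {x : EucSp 2 | ‖x‖ = a ∧ 0 ≤ ε * x 1} ⊆ arcMap a ε '' (Icc 0 Real.pi) := by
  rintro x ⟨hn, hx1⟩
  have hε2 : ε * ε = 1 := by rcases hε with h | h <;> simp [h]
  have hb : |x 0| ≤ a := hn ▸ abs_coord_le x 0
  have hb1 : -1 ≤ x 0 / a := by rw [le_div_iff₀ ha]; nlinarith [abs_le.1 hb]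
  have hb2 : x 0 / a ≤ 1 := by rw [div_le_one ha]; nlinarith [abs_le.1 hb]
  refine ⟨Real.arccos (x 0 / a), ⟨Real.arccos_nonneg _, Real.arccos_le_pi _⟩, ?_⟩
  have hsum : (x 0)^2 + (x 1)^2 = a^2 := by
    have h0 : Real.sqrt ((x 0)^2 + (x 1)^2) = a := (norm_coords x).symm.trans hn
    nlinarith [Real.sq_sqrt (by positivity : (0:ℝ) ≤ (x 0)^2 + (x 1)^2)]
  have hcos : Real.cos (Real.arccos (x 0 / a)) = x 0 / a := Real.cos_arccos hb1 hb2
  have hx1abs : |x 1| = ε * x 1 := by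
    rcases hε with h | h <;> subst h
    · rw [one_mul] at hx1 ⊢; exact abs_of_nonneg hx1
    · rw [neg_one_mul] at hx1 ⊢; rw [abs_of_nonpos (by linarith)]
  have hsq : 1 - (x 0 / a)^2 = (x 1 / a)^2 := by
    field_simp
    nlinarith [hsum]
  have hsin : Real.sin (Real.arccos (x 0 / a)) = |x 1| / a := by
    rw [Real.sin_arccos, hsq, Real.sqrt_sq_eq_abs, abs_div, abs_of_pos ha]
  conv_rhs => rw [eq_mk2 x]
  unfold arcMap
  rw [hcos, hsin]
  have h1 : a * (x 0 / a) = x 0 := by field_simp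
  have h2 : ε * (a * (|x 1| / a)) = x 1 := by
    rw [hx1abs]
    field_simp
    linear_combination x 1 * hε2
  rw [h1, h2]

/-- The open (upper or lower) half annulus. -/
def Sset (R ε : ℝ) : Set (EucSp 2) := {x | R < ‖x‖ ∧ ‖x‖ < 1 ∧ 0 < ε * x 1}

lemma cont_coord : Continuous fun x : EucSp 2 => x 1 :=
  (EuclideanSpace.proj (1 : Fin 2)).continuous

lemma isOpen_Sset (R ε : ℝ) : IsOpen (Sset R ε) := by
  have h1 : IsOpen {x : EucSp 2 | R < ‖x‖} := isOpen_lt continuous_const continuous_norm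
  have h2 : IsOpen {x : EucSp 2 | ‖x‖ < 1} := isOpen_lt continuous_norm continuous_const
  have h3 : IsOpen {x : EucSp 2 | 0 < ε * x 1} :=
    isOpen_lt continuous_const (continuous_const.mul cont_coord)
  have : Sset R ε = {x : EucSp 2 | R < ‖x‖} ∩ ({x | ‖x‖ < 1} ∩ {x | 0 < ε * x 1}) := by
    ext x; simp [Sset, and_assoc]
  rw [this]
  exact h1.inter (h2.inter h3)

lemma frontier_Sset_subset {R : ℝ} (ε : ℝ) (hR0 : 0 < R) (hε : ε = 1 ∨ ε = -1) :
    frontier (Sset R ε) ⊆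
      (arcMap R ε '' Icc 0 Real.pi) ∪ (arcMap 1 ε '' Icc 0 Real.pi) ∪
        (segMap '' (Icc (-1) (-R) ∪ Icc R 1)) := by
  have hCclosed : IsClosed {x : EucSp 2 | R ≤ ‖x‖ ∧ ‖x‖ ≤ 1 ∧ 0 ≤ ε * x 1} := by
    have h1 : IsClosed {x : EucSp 2 | R ≤ ‖x‖} := isClosed_le continuous_const continuous_norm
    have h2 : IsClosed {x : EucSp 2 | ‖x‖ ≤ 1} := isClosed_le continuous_norm continuous_const
    have h3 : IsClosed {x : EucSp 2 | 0 ≤ ε * x 1} :=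
      isClosed_le continuous_const (continuous_const.mul cont_coord)
    have : {x : EucSp 2 | R ≤ ‖x‖ ∧ ‖x‖ ≤ 1 ∧ 0 ≤ ε * x 1}
        = {x : EucSp 2 | R ≤ ‖x‖} ∩ ({x | ‖x‖ ≤ 1} ∩ {x | 0 ≤ ε * x 1}) := by
      ext x; simp [and_assoc]
    rw [this]; exact h1.inter (h2.inter h3)
  intro x hx
  have hxC : x ∈ {x : EucSp 2 | R ≤ ‖x‖ ∧ ‖x‖ ≤ 1 ∧ 0 ≤ ε * x 1} := by
    have hmem := hx.1
    have hsub : closure (Sset R ε) ⊆ {x : EucSp 2 | R ≤ ‖x‖ ∧ ‖x‖ ≤ 1 ∧ 0 ≤ ε * x 1} := by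
      apply closure_minimal _ hCclosed
      rintro y ⟨h1, h2, h3⟩
      exact ⟨h1.le, h2.le, h3.le⟩
    exact hsub hmem
  have hxnS : x ∉ Sset R ε := by
    intro hmem
    exact hx.2 (by rwa [(isOpen_Sset R ε).interior_eq])
  obtain ⟨hR, h1, h3⟩ := hxC
  rw [Sset, mem_setOf_eq, not_and_or, not_and_or] at hxnS
  have hcases : ‖x‖ = R ∨ ‖x‖ = 1 ∨ x 1 = 0 := by
    rcases hxnS with h | h | h
    · exact Or.inl (le_antisymm (not_lt.1 h) hR)
    · exact Or.inr (Or.inl (le_antisymm h1 (not_lt.1 h)))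
    · right; right
      have hε0 : ε ≠ 0 := by rcases hε with h' | h' <;> simp [h']
      have : ε * x 1 = 0 := le_antisymm (not_lt.1 h) h3
      exact (mul_eq_zero.1 this).resolve_left hε0
  rcases hcases with h | h | h
  · exact Or.inl (Or.inl (halfCircle_subset R ε hR0 hε ⟨h, h3⟩))
  · exact Or.inl (Or.inr (halfCircle_subset 1 ε one_pos hε ⟨h, h3⟩))
  · right
    have hxeq : x = segMap (x 0) := by
      rw [eq_mk2 x, h]; rfl
    have hnx : ‖x‖ = |x 0| := by
      rw [norm_coords, h]
      simp [Real.sqrt_sq_eq_abs]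
    refine ⟨x 0, ?_, hxeq.symm⟩
    rcases le_or_gt 0 (x 0) with hs | hs
    · right
      rw [hnx, abs_of_nonneg hs] at hR h1
      exact ⟨hR, h1⟩
    · left
      rw [hnx, abs_of_neg hs] at hR h1
      constructor <;> linarith

lemma hmeas_arc (a ε : ℝ) (ha : 0 ≤ a) (hε : ε = 1 ∨ ε = -1) :
    μH[1] (arcMap a ε '' Icc 0 Real.pi) ≤ ENNReal.ofReal (Real.pi * a) := by
  have h := (lipschitz_arcMap a ε ha hε).hausdorffMeasure_image_le (by norm_num : (0:ℝ) ≤ 1)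
    (Icc 0 Real.pi)
  rw [MeasureTheory.hausdorffMeasure_real, Real.volume_Icc, ENNReal.rpow_one] at h
  refine h.trans ?_
  have hc : (a.toNNReal : ℝ≥0∞) = ENNReal.ofReal a := rfl
  rw [hc, ← ENNReal.ofReal_mul ha, sub_zero]
  exact ENNReal.ofReal_le_ofReal (by nlinarith [Real.pi_pos])

lemma hmeas_seg {R : ℝ} (hR1 : R ≤ 1) :
    μH[1] (segMap '' (Icc (-1) (-R) ∪ Icc R 1)) ≤ ENNReal.ofReal (2 * (1 - R)) := by
  rw [image_union]
  refine (measure_union_le _ _).trans ?_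
  have b1 := lipschitz_segMap.hausdorffMeasure_image_le (by norm_num : (0:ℝ) ≤ 1) (Icc (-1) (-R))
  have b2 := lipschitz_segMap.hausdorffMeasure_image_le (by norm_num : (0:ℝ) ≤ 1) (Icc R 1)
  rw [MeasureTheory.hausdorffMeasure_real, Real.volume_Icc, ENNReal.rpow_one,
    ENNReal.coe_one, one_mul] at b1 b2
  refine (add_le_add b1 b2).trans ?_
  rw [← ENNReal.ofReal_add (by linarith) (by linarith)]
  exact ENNReal.ofReal_le_ofReal (by linarith)

lemma perim_Sset_le {R : ℝ} (ε : ℝ) (hR0 : 0 < R) (hR1 : R < 1) (hε : ε = 1 ∨ ε = -1) :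
    perim (Sset R ε) ≤ ENNReal.ofReal (Real.pi * (1 + R) + 2 * (1 - R)) := by
  have hd : ((2:ℕ):ℝ) - 1 = 1 := by norm_num
  rw [perim, hd]
  calc μH[1] (essBdry (Sset R ε)) ≤ μH[1] ((arcMap R ε '' Icc 0 Real.pi)
        ∪ (arcMap 1 ε '' Icc 0 Real.pi) ∪ (segMap '' (Icc (-1) (-R) ∪ Icc R 1))) :=
      measure_mono ((essBdry_subset_frontier _).trans (frontier_Sset_subset ε hR0 hε))
    _ ≤ μH[1] ((arcMap R ε '' Icc 0 Real.pi) ∪ (arcMap 1 ε '' Icc 0 Real.pi))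
        + μH[1] (segMap '' (Icc (-1) (-R) ∪ Icc R 1)) := measure_union_le _ _
    _ ≤ (μH[1] (arcMap R ε '' Icc 0 Real.pi) + μH[1] (arcMap 1 ε '' Icc 0 Real.pi))
        + μH[1] (segMap '' (Icc (-1) (-R) ∪ Icc R 1)) := by
        gcongr
        exact measure_union_le _ _
    _ ≤ (ENNReal.ofReal (Real.pi * R) + ENNReal.ofReal (Real.pi * 1))
        + ENNReal.ofReal (2 * (1 - R)) := by
        gcongr
        · exact hmeas_arc R ε hR0.le hε
        · exact hmeas_arc 1 ε one_pos.le hε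
        · exact hmeas_seg hR1.le
    _ ≤ ENNReal.ofReal (Real.pi * (1 + R) + 2 * (1 - R)) := by
        rw [← ENNReal.ofReal_add (by positivity) (by positivity),
          ← ENNReal.ofReal_add (by positivity) (by linarith)]
        exact ENNReal.ofReal_le_ofReal (by nlinarith [Real.pi_pos])

lemma vol_ann {R : ℝ} (hR0 : 0 ≤ R) (hR1 : R < 1) :
    volume (ann R) = ENNReal.ofReal (Real.pi * (1 - R^2)) := by
  have h1 : ann R = ball (0 : EucSp 2) 1 \ closedBall 0 R := by
    ext x
    simp [ann, mem_ball_zero_iff, mem_closedBall_zero_iff, not_le, and_comm]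
  rw [h1, measure_diff (closedBall_subset_ball hR1) measurableSet_closedBall.nullMeasurableSet
    (measure_closedBall_lt_top).ne]
  have hb : volume (ball (0 : EucSp 2) 1) = ENNReal.ofReal Real.pi := by
    rw [EuclideanSpace.volume_ball]
    norm_num [Real.Gamma_two, Real.sq_sqrt Real.pi_nonneg]
  have hc : volume (closedBall (0 : EucSp 2) R) = ENNReal.ofReal (Real.pi * R^2) := by
    rw [EuclideanSpace.volume_closedBall]
    rw [show (Fintype.card (Fin 2)) = 2 from rfl, ← ENNReal.ofReal_pow hR0,
      ← ENNReal.ofReal_mul (by positivity : (0:ℝ) ≤ R^2)]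
    norm_num [Real.Gamma_two, Real.sq_sqrt Real.pi_nonneg]
    congr 1; ring
  rw [hb, hc, ← ENNReal.ofReal_sub _ (by positivity)]
  congr 1; ring

lemma hyperplane_null : volume {x : EucSp 2 | x 1 = 0} = 0 := by
  set p : Submodule ℝ (EucSp 2) :=
    LinearMap.ker (EuclideanSpace.projₗ (1 : Fin 2) : EucSp 2 →ₗ[ℝ] ℝ) with hp
  have : {x : EucSp 2 | x 1 = 0} = (p : Set (EucSp 2)) := by
    ext x; simp [hp, LinearMap.mem_ker]
  rw [this]
  apply Measure.addHaar_submodule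
  intro htop
  have h1 : EuclideanSpace.single (1 : Fin 2) (1:ℝ) ∈ p := by
    rw [htop]; trivial
  rw [hp, LinearMap.mem_ker] at h1
  simp at h1

lemma vol_Sset_neg_eq (R : ℝ) : volume (Sset R (-1)) = volume (Sset R 1) := by
  have hmp : MeasurePreserving (fun x : EucSp 2 => -x) volume volume :=
    (LinearIsometryEquiv.neg ℝ (E := EucSp 2)).measurePreserving
  have hpre : Sset R (-1) = (fun x : EucSp 2 => -x) ⁻¹' (Sset R 1) := by
    ext x
    simp only [Sset, mem_setOf_eq, mem_preimage, norm_neg]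
    have : (-x) 1 = -(x 1) := rfl
    rw [this]
    constructor
    · rintro ⟨h1, h2, h3⟩; exact ⟨h1, h2, by linarith⟩
    · rintro ⟨h1, h2, h3⟩; exact ⟨h1, h2, by linarith⟩
  rw [hpre, hmp.measure_preimage (isOpen_Sset R 1).measurableSet.nullMeasurableSet]

lemma Sset_disjoint (R : ℝ) : Disjoint (Sset R 1) (Sset R (-1)) := by
  rw [Set.disjoint_left]
  rintro x ⟨_, _, h3⟩ ⟨_, _, h3'⟩
  simp only [one_mul] at h3
  nlinarith

lemma Sset_subset_ann (R ε : ℝ) : Sset R ε ⊆ ann R := by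
  rintro x ⟨h1, h2, _⟩; exact ⟨h1, h2⟩

lemma vol_Sset {R : ℝ} (hR0 : 0 < R) (hR1 : R < 1) (ε : ℝ) (hε : ε = 1 ∨ ε = -1) :
    volume (Sset R ε) = ENNReal.ofReal (Real.pi * (1 - R^2) / 2) := by
  have hdisj := Sset_disjoint R
  have hsub : Sset R 1 ∪ Sset R (-1) ⊆ ann R := by
    rintro x (hx | hx) <;> exact Sset_subset_ann R _ hx
  have hdiff : ann R \ (Sset R 1 ∪ Sset R (-1)) ⊆ {x : EucSp 2 | x 1 = 0} := by
    rintro x ⟨⟨h1, h2⟩, hn⟩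
    simp only [mem_union, Sset, mem_setOf_eq, not_or, not_and_or] at hn
    obtain ⟨ha, hb⟩ := hn
    rcases ha with h | h | h
    · exact absurd h1 h
    · exact absurd h2 h
    · rcases hb with h' | h' | h'
      · exact absurd h1 h'
      · exact absurd h2 h'
      · rw [one_mul] at h
        rw [neg_one_mul] at h'
        simp only [mem_setOf_eq]
        push_neg at h h'
        linarith
  have hvol_union : volume (Sset R 1 ∪ Sset R (-1)) = volume (ann R) := by
    apply le_antisymm (measure_mono hsub)
    calc volume (ann R) ≤ volume ((Sset R 1 ∪ Sset R (-1)) ∪ {x : EucSp 2 | x 1 = 0}) := by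
          apply measure_mono
          intro x hx
          by_cases hmem : x ∈ Sset R 1 ∪ Sset R (-1)
          · exact Or.inl hmem
          · exact Or.inr (hdiff ⟨hx, hmem⟩)
      _ ≤ volume (Sset R 1 ∪ Sset R (-1)) + volume {x : EucSp 2 | x 1 = 0} :=
          measure_union_le _ _
      _ = volume (Sset R 1 ∪ Sset R (-1)) := by rw [hyperplane_null, add_zero]
  have hadd : volume (Sset R 1) + volume (Sset R (-1)) = volume (ann R) := by
    rw [← measure_union hdisj (isOpen_Sset R (-1)).measurableSet, hvol_union]
  rw [vol_Sset_neg_eq, vol_ann hR0.le hR1] at hadd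
  have hfin : volume (Sset R 1) ≠ ⊤ := by
    have hle : volume (Sset R 1) ≤ volume (ann R) := measure_mono (fun x hx => hsub (Or.inl hx))
    rw [vol_ann hR0.le hR1] at hle
    exact ne_top_of_le_ne_top ENNReal.ofReal_ne_top hle
  have hnn : (0:ℝ) ≤ Real.pi * (1 - R^2) / 2 := by
    nlinarith [Real.pi_pos, mul_pos (by linarith : (0:ℝ) < 1-R) (by linarith : (0:ℝ) < 1+R)]
  have hkey : volume (Sset R 1) = ENNReal.ofReal (Real.pi * (1 - R^2) / 2) := by
    have h2 : ENNReal.ofReal (Real.pi * (1 - R^2)) =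
        ENNReal.ofReal (Real.pi * (1 - R^2) / 2) + ENNReal.ofReal (Real.pi * (1 - R^2) / 2) := by
      rw [← ENNReal.ofReal_add hnn hnn]
      congr 1; ring
    rw [h2] at hadd
    have ht := congrArg ENNReal.toReal hadd
    rw [ENNReal.toReal_add hfin hfin, ENNReal.toReal_add ENNReal.ofReal_ne_top
      ENNReal.ofReal_ne_top] at ht
    have : (volume (Sset R 1)).toReal = (ENNReal.ofReal (Real.pi * (1 - R^2) / 2)).toReal := by
      linarith
    exact (ENNReal.toReal_eq_toReal_iff' hfin ENNReal.ofReal_ne_top).1 this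
  rcases hε with h | h
  · rw [h]; exact hkey
  · rw [h, vol_Sset_neg_eq]; exact hkey

end Aux

/-- Upper bound for the second Cheeger constant of the annulus:
`h₂(Ω) ≤ 2(π(1+R) + 2(1-R)) / (π(1-R²)) < 4/(1-R)`. -/
theorem annulus_second_cheeger_upper_bound {R : ℝ} (hR0 : 0 < R) (hR1 : R < 1) :
    cheegerK 2 (ann R) ≤
      ENNReal.ofReal (2 * (Real.pi * (1 + R) + 2 * (1 - R)) / (Real.pi * (1 - R ^ 2))) ∧
    2 * (Real.pi * (1 + R) + 2 * (1 - R)) / (Real.pi * (1 - R ^ 2)) < 4 / (1 - R) ∧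
    cheegerK 2 (ann R) < ENNReal.ofReal (4 / (1 - R)) := by
  have h1R : (0:ℝ) < 1 - R := by linarith
  have hden : (0:ℝ) < Real.pi * (1 - R ^ 2) := by
    nlinarith [Real.pi_pos, mul_pos h1R (by linarith : (0:ℝ) < 1 + R)]
  have hnum : (0:ℝ) < Real.pi * (1 + R) + 2 * (1 - R) := by
    nlinarith [Real.pi_pos]
  -- the candidate pair: upper and lower half annuli
  set Etup : Fin 2 → Set (EucSp 2) := ![Sset R 1, Sset R (-1)] with hEtup
  have hE0 : Etup 0 = Sset R 1 := rfl
  have hE1 : Etup 1 = Sset R (-1) := rfl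
  have hAdm : AdmissibleTuple (ann R) Etup := by
    refine ⟨?_, ?_, ?_, ?_⟩
    · intro i; fin_cases i
      · exact Sset_subset_ann R 1
      · exact Sset_subset_ann R (-1)
    · intro i; fin_cases i
      · exact (isOpen_Sset R 1).measurableSet
      · exact (isOpen_Sset R (-1)).measurableSet
    · intro i
      have hpos : (0:ℝ≥0∞) < ENNReal.ofReal (Real.pi * (1 - R^2) / 2) := by
        rw [ENNReal.ofReal_pos]; linarith [hden]
      fin_cases i
      · show 0 < volume (Sset R 1)
        rw [vol_Sset hR0 hR1 1 (Or.inl rfl)]; exact hpos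
      · show 0 < volume (Sset R (-1))
        rw [vol_Sset hR0 hR1 (-1) (Or.inr rfl)]; exact hpos
    · intro i j hij
      fin_cases i <;> fin_cases j
      · exact absurd rfl hij
      · exact Sset_disjoint R
      · exact (Sset_disjoint R).symm
      · exact absurd rfl hij
  have hratio : ∀ ε : ℝ, ε = 1 ∨ ε = -1 →
      perim (Sset R ε) / volume (Sset R ε) ≤
        ENNReal.ofReal (2 * (Real.pi * (1 + R) + 2 * (1 - R)) / (Real.pi * (1 - R ^ 2))) := by
    intro ε hε
    rw [vol_Sset hR0 hR1 ε hε]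
    refine le_trans (ENNReal.div_le_div (perim_Sset_le ε hR0 hR1 hε) le_rfl) ?_
    rw [← ENNReal.ofReal_div_of_pos (by linarith [hden])]
    apply ENNReal.ofReal_le_ofReal
    rw [div_le_div_iff₀ (by linarith [hden]) hden]
    ring_nf
    exact le_refl _
  have hbound : cheegerK 2 (ann R) ≤
      ENNReal.ofReal (2 * (Real.pi * (1 + R) + 2 * (1 - R)) / (Real.pi * (1 - R ^ 2))) := by
    have hstep : cheegerK 2 (ann R) ≤ ⨆ i, perim (Etup i) / volume (Etup i) :=
      iInf₂_le Etup hAdm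
    refine hstep.trans (iSup_le fun i => ?_)
    fin_cases i
    · show perim (Sset R 1) / volume (Sset R 1) ≤ _
      exact hratio 1 (Or.inl rfl)
    · show perim (Sset R (-1)) / volume (Sset R (-1)) ≤ _
      exact hratio (-1) (Or.inr rfl)
  have hlt : 2 * (Real.pi * (1 + R) + 2 * (1 - R)) / (Real.pi * (1 - R ^ 2)) < 4 / (1 - R) := by
    rw [div_lt_div_iff₀ hden h1R]
    nlinarith [Real.pi_gt_three, mul_pos h1R (by linarith : (0:ℝ) < 1 + R),
      mul_pos (mul_pos h1R h1R) (by linarith : (0:ℝ) < 1 + R)]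
  refine ⟨hbound, hlt, lt_of_le_of_lt hbound ?_⟩
  rw [ENNReal.ofReal_lt_ofReal_iff (by positivity)]
  exact hlt

end
end
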